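/- arXiv:2509.01948 — 7 statements merged into one kernel-verified Lean document; each statement's English description precedes it below -/
import Mathlib

section
/- Let X be a standard Borel space and D a locally countable Borel directed graph on X in which every vertex has at most n out-neighbors. Then the Borel chromatic number of the underlying graph of D is either infinite or at most (n+1)(n+2)/2. -/
/-!
Write `D` as the union of the graphs of `n` Borel partial maps `f m`: after embedding `X` into
`ℝ`, peel off the maximal point of each section and induct on `n`. Given a Borel colouring `c`
with finitely many colours, let `i` be the Grundy (mex) labelling along the edges `x → f m x` that
go up in `c`, and `j` the Grundy labelling along the edges that go down in `c` and preserve `i`;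
both recursions are well founded since `c` is finite-valued, and each step preserves
measurability. A vertex has at least `i x` edges of the first kind, hence at most `n - i x` of the
second, so `i + j ≤ n` and `(i, j)` is a proper colouring by at most `(n + 1)(n + 2)/2` pairs.
-/

open Set Function Finset

lemma ncard_le_of_subset_of_exists_notMem {α : Type*} {A B : Set α} {n : ℕ} (hAB : A ⊆ B)
    (hB : B.Finite) (hBn : B.ncard ≤ n + 1) (hmiss : A.Nonempty → ∃ b ∈ B, b ∉ A) :
    A.ncard ≤ n := by
  rcases A.eq_empty_or_nonempty with rfl | hA
  · simp
  obtain ⟨b, hb, hbA⟩ := hmiss hA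
  have := ncard_lt_ncard (hAB.ssubset_of_not_subset fun h => hbA (h hb)) hB
  omega

section Graphs

variable {X Y : Type*} [MeasurableSpace X] [MeasurableSpace Y]

def IsUnionOfMeasurableGraphs (n : ℕ) (D : Set (X × Y)) : Prop :=
  ∃ (s : Fin n → Set X) (f : Fin n → X → Y), (∀ m, MeasurableSet (s m)) ∧
    (∀ m, Measurable (f m)) ∧ ∀ x y, (x, y) ∈ D ↔ ∃ m, x ∈ s m ∧ f m x = y

lemma IsUnionOfMeasurableGraphs.measurableSet_image_fst {n : ℕ} {D : Set (X × Y)}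
    (hD : IsUnionOfMeasurableGraphs n D) : MeasurableSet (Prod.fst '' D) := by
  obtain ⟨s, f, hs, -, hsf⟩ := hD
  convert MeasurableSet.iUnion hs
  ext x
  simp only [mem_image, Prod.exists, exists_and_right, exists_eq_right, mem_iUnion, hsf]
  exact ⟨fun ⟨_, m, hm, _⟩ => ⟨m, hm⟩, fun ⟨m, hm⟩ => ⟨f m x, m, hm, rfl⟩⟩

lemma IsUnionOfMeasurableGraphs.graph_union {n : ℕ} {D : Set (X × Y)}
    (hD : IsUnionOfMeasurableGraphs n D) {s : Set X} {f : X → Y} (hs : MeasurableSet s)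
    (hf : Measurable f) :
    IsUnionOfMeasurableGraphs (n + 1) ({q | q.1 ∈ s ∧ f q.1 = q.2} ∪ D) := by
  obtain ⟨s', f', hs', hf', hsf'⟩ := hD
  refine ⟨Fin.cons s s', Fin.cons f f', Fin.cases hs hs', Fin.cases hf hf', fun x y => ?_⟩
  simp [Fin.exists_fin_succ, hsf']

lemma exists_measurable_graph_eq [StandardBorelSpace X] [StandardBorelSpace Y] [Nonempty Y]
    {G : Set (X × Y)} (hG : MeasurableSet G)
    (huniq : ∀ x y y', (x, y) ∈ G → (x, y') ∈ G → y = y') :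
    ∃ (s : Set X) (f : X → Y), MeasurableSet s ∧ Measurable f ∧
      G = {q | q.1 ∈ s ∧ f q.1 = q.2} := by
  have : StandardBorelSpace G := hG.standardBorel
  let π : G → X := fun q => q.1.1
  have hinj : Injective π := by
    rintro ⟨⟨x, y⟩, hq⟩ ⟨⟨x', y'⟩, hq'⟩ (rfl : x = x')
    obtain rfl := huniq x y y' hq hq'
    rfl
  -- Lusin–Souslin: an injective Borel map on a standard Borel space is a Borel embedding.
  have hemb : MeasurableEmbedding π :=
    (measurable_fst.comp measurable_subtype_coe).measurableEmbedding hinj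
  refine ⟨range π, extend π (fun q => q.1.2) fun _ => Classical.arbitrary Y,
    hemb.measurableSet_range, hemb.measurable_extend (measurable_snd.comp measurable_subtype_coe)
    measurable_const, ?_⟩
  ext ⟨x, y⟩
  constructor
  · intro h
    exact ⟨⟨⟨(x, y), h⟩, rfl⟩, hinj.extend_apply _ _ ⟨(x, y), h⟩⟩
  · rintro ⟨⟨q, rfl⟩, hy⟩
    rw [hinj.extend_apply] at hy
    subst hy
    exact q.2

/-- The non-maximal points of the sections of `D` are the projection of a set in `(X × ℝ) × ℝ`
with smaller sections, so they form a measurable set by induction; the maximal points then form a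
single measurable graph. -/
theorem isUnionOfMeasurableGraphs_real_of_ncard_le [StandardBorelSpace X] (n : ℕ)
    {D : Set (X × ℝ)} (hD : MeasurableSet D) (hfin : ∀ x, {y | (x, y) ∈ D}.Finite)
    (hcard : ∀ x, {y | (x, y) ∈ D}.ncard ≤ n) : IsUnionOfMeasurableGraphs n D := by
  induction n generalizing X with
  | zero =>
    refine ⟨Fin.elim0, Fin.elim0, fun m => m.elim0, fun m => m.elim0, fun x y => ?_⟩
    have hempty := (ncard_eq_zero (hfin x)).mp (Nat.le_zero.mp (hcard x))
    simpa using (eq_empty_iff_forall_notMem.mp hempty y : (x, y) ∉ D)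
  | succ n ih =>
    let U : Set ((X × ℝ) × ℝ) := {q | q.1 ∈ D ∧ (q.1.1, q.2) ∈ D ∧ q.1.2 < q.2}
    have hUmeas : MeasurableSet U :=
      (measurable_fst hD).inter ((measurable_fst.fst.prodMk measurable_snd hD).inter
        (measurableSet_lt measurable_fst.snd measurable_snd))
    have hU : IsUnionOfMeasurableGraphs n U := by
      refine ih hUmeas (fun q => (hfin q.1).subset fun y hy => hy.2.1) fun q =>
        ncard_le_of_subset_of_exists_notMem (fun y hy => hy.2.1) (hfin q.1) (hcard q.1) ?_
      exact fun ⟨y, hy⟩ => ⟨q.2, hy.1, fun h => h.2.2.false⟩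
    let T := Prod.fst '' U
    have hT : MeasurableSet T := hU.measurableSet_image_fst
    have hmemT : ∀ x y, (x, y) ∈ T ↔ ∃ y', (x, y) ∈ D ∧ (x, y') ∈ D ∧ y < y' := by
      simp [T, U]
    have huniq : ∀ x y y', (x, y) ∈ D \ T → (x, y') ∈ D \ T → y = y' := by
      intro x y y' hy hy'
      by_contra hne
      rcases lt_or_gt_of_ne hne with h | h
      · exact hy.2 ((hmemT x y).mpr ⟨y', hy.1, hy'.1, h⟩)
      · exact hy'.2 ((hmemT x y').mpr ⟨y, hy'.1, hy.1, h⟩)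
    obtain ⟨s, f, hs, hf, hmax⟩ := exists_measurable_graph_eq (hD.diff hT) huniq
    have hrest : IsUnionOfMeasurableGraphs n (D ∩ T) := by
      refine ih (hD.inter hT) (fun x => (hfin x).subset fun y hy => hy.1)
        fun x => ncard_le_of_subset_of_exists_notMem (fun y hy => hy.1) (hfin x) (hcard x) ?_
      rintro ⟨y, hy, -⟩
      obtain ⟨b, hb, hbmax⟩ := exists_max_image {y | (x, y) ∈ D} id (hfin x) ⟨y, hy⟩
      refine ⟨b, hb, fun hbT => ?_⟩
      obtain ⟨y', -, hy', hlt⟩ := (hmemT x b).mp hbT.2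
      exact (hbmax y' hy').not_gt hlt
    rw [← sdiff_union_inter D T, hmax]
    exact hrest.graph_union hs hf

theorem isUnionOfMeasurableGraphs_of_ncard_le [StandardBorelSpace X] [StandardBorelSpace Y]
    [Nonempty Y] {n : ℕ} {D : Set (X × Y)} (hD : MeasurableSet D)
    (hfin : ∀ x, {y | (x, y) ∈ D}.Finite) (hcard : ∀ x, {y | (x, y) ∈ D}.ncard ≤ n) :
    IsUnionOfMeasurableGraphs n D := by
  obtain ⟨φ, hφ⟩ := MeasureTheory.exists_measurableEmbedding_real Y
  let D' := Prod.map id φ '' D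
  have hsec : ∀ x, {r | (x, r) ∈ D'} = φ '' {y | (x, y) ∈ D} := fun x => by
    ext r
    simp [D']
  obtain ⟨s, g, hs, hg, hsg⟩ := isUnionOfMeasurableGraphs_real_of_ncard_le n
    ((MeasurableEmbedding.id.prodMap hφ).measurableSet_image' hD)
    (fun x => hsec x ▸ (hfin x).image φ)
    (fun x => by rw [hsec, ncard_image_of_injective _ hφ.injective]; exact hcard x)
  let ψ : ℝ → Y := extend φ id fun _ => Classical.arbitrary Y
  have hψ : ∀ y, ψ (φ y) = y := hφ.injective.extend_apply _ _
  refine ⟨s, fun m => ψ ∘ g m, hs,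
    fun m => (hφ.measurable_extend measurable_id measurable_const).comp (hg m), fun x y => ?_⟩
  have hD' : (x, y) ∈ D ↔ (x, φ y) ∈ D' := by
    simp [D', hφ.injective.eq_iff]
  rw [hD', hsg]
  constructor
  · rintro ⟨m, hm, he⟩
    exact ⟨m, hm, by simp [he, hψ]⟩
  · rintro ⟨m, hm, rfl⟩
    obtain ⟨y', -, hy'⟩ : g m x ∈ φ '' {y | (x, y) ∈ D} :=
      hsec x ▸ (hsg x _).mpr ⟨m, hm, rfl⟩
    exact ⟨m, hm, by simp [← hy', hψ]⟩

end Graphs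

section Grundy

variable {Y : Type*} {n : ℕ} (f : Fin n → Y → Y) (p : Fin n → Y → Prop)

noncomputable def mexStep (g : Y → ℕ) (x : Y) : ℕ :=
  sInf {r | ∀ m, p m x → g (f m x) ≠ r}

variable {f p}

lemma mexStep_ne (g : Y → ℕ) {m : Fin n} {x : Y} (hm : p m x) :
    g (f m x) ≠ mexStep f p g x := by
  have hne : {r | ∀ m, p m x → g (f m x) ≠ r}.Nonempty := by
    obtain ⟨r, hr⟩ := (finite_range fun m => g (f m x)).infinite_compl.nonempty
    exact ⟨r, fun m _ hm' => hr ⟨m, hm'⟩⟩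
  exact Nat.sInf_mem hne m hm

lemma exists_eq_of_lt_mexStep {g : Y → ℕ} {x : Y} {r : ℕ} (hr : r < mexStep f p g x) :
    ∃ m, p m x ∧ g (f m x) = r := by
  simpa using Nat.notMem_of_lt_sInf hr

lemma mexStep_le_card [DecidableRel p] (g : Y → ℕ) (x : Y) :
    mexStep f p g x ≤ #(univ.filter (p · x)) := by
  calc mexStep f p g x = #(Finset.range (mexStep f p g x)) := (card_range _).symm
    _ ≤ #((univ.filter (p · x)).image fun m => g (f m x)) := by
      refine card_le_card fun r hr => ?_
      obtain ⟨m, hm, rfl⟩ := exists_eq_of_lt_mexStep (mem_range.mp hr)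
      exact mem_image_of_mem _ (by simpa using hm)
    _ ≤ _ := card_image_le

lemma mexStep_congr {g g' : Y → ℕ} {x : Y} (h : ∀ m, p m x → g (f m x) = g' (f m x)) :
    mexStep f p g x = mexStep f p g' x := by
  unfold mexStep
  congr 1
  ext r
  exact forall_congr' fun m => imp_congr_right fun hm => by rw [h m hm]

lemma measurable_mexStep [MeasurableSpace Y] (hf : ∀ m, Measurable (f m))
    (hp : ∀ m, MeasurableSet {x | p m x}) {g : Y → ℕ} (hg : Measurable g) :
    Measurable (mexStep f p g) := by
  classical
  -- `mexStep f p g x` is a function of the labels `g (f m x) + 1`, with `0` marking absent edges.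
  let labels : Y → Fin n → ℕ := fun x m => if p m x then g (f m x) + 1 else 0
  have hlabels : Measurable labels := measurable_pi_lambda _ fun m =>
    Measurable.ite (hp m) ((hg.comp (hf m)).add_const 1) measurable_const
  have hfactor :
      mexStep f p g = (fun w : Fin n → ℕ => sInf {r | ∀ m, w m ≠ r + 1}) ∘ labels := by
    ext x
    simp only [mexStep, comp_apply, labels]
    congr 1
    ext r
    refine forall_congr' fun m => ?_
    split_ifs <;> simp [*]
  rw [hfactor]
  exact (measurable_of_countable _).comp hlabels

lemma ne_of_isFixedPt_mexStep {g : Y → ℕ} (hg : IsFixedPt (mexStep f p) g) {m : Fin n} {x : Y}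
    (hm : p m x) : g (f m x) ≠ g x :=
  fun h => mexStep_ne g hm (h.trans (congrFun hg x).symm)

lemma le_card_of_isFixedPt_mexStep [DecidableRel p] {g : Y → ℕ} (hg : IsFixedPt (mexStep f p) g)
    (x : Y) : g x ≤ #(univ.filter (p · x)) :=
  (congrFun hg x).symm.trans_le (mexStep_le_card g x)

lemma iterate_mexStep_eq {K : ℕ} (rk : Y → Fin K) (hrk : ∀ m x, p m x → rk (f m x) < rk x)
    (x : Y) {t t' : ℕ} (ht : (rk x : ℕ) < t) (ht' : (rk x : ℕ) < t') :
    (mexStep f p)^[t] 0 x = (mexStep f p)^[t'] 0 x := by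
  induction h : (rk x : ℕ) using Nat.strong_induction_on generalizing x t t' with
  | _ d ih =>
    obtain ⟨a, rfl⟩ : ∃ a, t = a + 1 := ⟨t - 1, by omega⟩
    obtain ⟨b, rfl⟩ : ∃ b, t' = b + 1 := ⟨t' - 1, by omega⟩
    simp only [iterate_succ_apply']
    refine mexStep_congr fun m hm => ?_
    have hlt : (rk (f m x) : ℕ) < rk x := hrk m x hm
    exact ih _ (h ▸ hlt) _ (by omega) (by omega) rfl

lemma measurable_iterate_mexStep [MeasurableSpace Y] (hf : ∀ m, Measurable (f m))
    (hp : ∀ m, MeasurableSet {x | p m x}) (t : ℕ) : Measurable ((mexStep f p)^[t] 0) := by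
  induction t with
  | zero => exact measurable_const
  | succ t ih =>
    rw [iterate_succ']
    exact measurable_mexStep hf hp ih

lemma exists_measurable_isFixedPt_mexStep [MeasurableSpace Y] (hf : ∀ m, Measurable (f m))
    (hp : ∀ m, MeasurableSet {x | p m x}) {K : ℕ} (rk : Y → Fin K)
    (hrk : ∀ m x, p m x → rk (f m x) < rk x) :
    ∃ g : Y → ℕ, Measurable g ∧ IsFixedPt (mexStep f p) g := by
  refine ⟨(mexStep f p)^[K] 0, measurable_iterate_mexStep hf hp K, ?_⟩
  ext x
  rw [← iterate_succ_apply' (mexStep f p)]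
  exact iterate_mexStep_eq rk hrk x (by omega) (rk x).isLt

end Grundy

def triangle (n : ℕ) : Finset (ℕ × ℕ) := (range (n + 1)).biUnion antidiagonal

lemma mem_triangle {n : ℕ} {q : ℕ × ℕ} : q ∈ triangle n ↔ q.1 + q.2 ≤ n := by
  simp [triangle]

lemma card_triangle (n : ℕ) : #(triangle n) = (n + 1) * (n + 2) / 2 := by
  have hdisj : (Finset.range (n + 1) : Set ℕ).PairwiseDisjoint antidiagonal :=
    fun a _ b _ hab => disjoint_left.mpr fun q ha hb =>
      hab ((mem_antidiagonal.mp ha).symm.trans (mem_antidiagonal.mp hb))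
  have hgauss : (∑ k ∈ range (n + 1), (k + 1)) * 2 = (n + 1) * (n + 2) := by
    have h := sum_range_id_mul_two (n + 2)
    rwa [sum_range_succ', add_zero, mul_comm (n + 2)] at h
  rw [triangle, card_biUnion hdisj, ← hgauss, Nat.mul_div_cancel _ two_pos]
  simp only [Nat.card_antidiagonal]

theorem exists_measurable_pair_labeling {Y : Type*} [MeasurableSpace Y] {n k : ℕ}
    {s : Fin n → Set Y} {f : Fin n → Y → Y} (hs : ∀ m, MeasurableSet (s m))
    (hf : ∀ m, Measurable (f m)) (c : Y → Fin k) (hc : Measurable c)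
    (hcf : ∀ m x, x ∈ s m → c (f m x) ≠ c x) :
    ∃ i j : Y → ℕ, Measurable i ∧ Measurable j ∧ (∀ x, i x + j x ≤ n) ∧
      ∀ m x, x ∈ s m → (i (f m x), j (f m x)) ≠ (i x, j x) := by
  classical
  let pI : Fin n → Y → Prop := fun m x => x ∈ s m ∧ c x < c (f m x)
  have hmeas_lt : ∀ m, MeasurableSet {x | c x < c (f m x)} := fun m =>
    measurableSet_lt hc (hc.comp (hf m))
  have hmeas_gt : ∀ m, MeasurableSet {x | c (f m x) < c x} := fun m =>
    measurableSet_lt (hc.comp (hf m)) hc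
  obtain ⟨i, hi, hiI⟩ := exists_measurable_isFixedPt_mexStep (p := pI) hf
    (fun m => (hs m).inter (hmeas_lt m)) (fun x => (c x).rev)
    (fun m x hm => Fin.rev_lt_rev.mpr hm.2)
  let pJ : Fin n → Y → Prop := fun m x => x ∈ s m ∧ c (f m x) < c x ∧ i (f m x) = i x
  obtain ⟨j, hj, hjJ⟩ := exists_measurable_isFixedPt_mexStep (p := pJ) hf
    (fun m => (hs m).inter ((hmeas_gt m).inter
      (measurableSet_eq_fun (hi.comp (hf m)) hi))) c (fun m x hm => hm.2.1)
  refine ⟨i, j, hi, hj, fun x => ?_, fun m x hx => ?_⟩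
  · have hdisj : Disjoint (univ.filter (pI · x)) (univ.filter (pJ · x)) :=
      disjoint_filter.mpr fun m _ hI hJ => hI.2.not_gt hJ.2.1
    calc i x + j x ≤ #(univ.filter (pI · x)) + #(univ.filter (pJ · x)) :=
          add_le_add (le_card_of_isFixedPt_mexStep hiI x) (le_card_of_isFixedPt_mexStep hjJ x)
      _ = #(univ.filter (pI · x) ∪ univ.filter (pJ · x)) := (card_union_of_disjoint hdisj).symm
      _ ≤ n := (card_le_univ _).trans_eq (Fintype.card_fin n)
  · rw [Ne, Prod.ext_iff, not_and_or]
    rcases (hcf m x hx).lt_or_gt with hlt | hgt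
    · by_cases hieq : i (f m x) = i x
      · exact Or.inr (ne_of_isFixedPt_mexStep hjJ (m := m) ⟨hx, hlt, hieq⟩)
      · exact Or.inl hieq
    · exact Or.inl (ne_of_isFixedPt_mexStep hiI (m := m) ⟨hx, hgt⟩)

theorem IsUnionOfMeasurableGraphs.exists_measurable_coloring {Y : Type*} [MeasurableSpace Y]
    {n k : ℕ} {D : Set (Y × Y)} (hD : IsUnionOfMeasurableGraphs n D) (c : Y → Fin k)
    (hc : Measurable c) (hcD : ∀ x y, (x, y) ∈ D → c x ≠ c y) :
    ∃ c' : Y → Fin ((n + 1) * (n + 2) / 2), Measurable c' ∧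
      ∀ x y, (x, y) ∈ D → c' x ≠ c' y := by
  obtain ⟨s, f, hs, hf, hsf⟩ := hD
  obtain ⟨i, j, hi, hj, hij, hne⟩ := exists_measurable_pair_labeling hs hf c hc
    fun m x hx => (hcD x _ ((hsf x _).mpr ⟨m, hx, rfl⟩)).symm
  let e := (triangle n).equivFinOfCardEq (card_triangle n)
  refine ⟨fun x => e ⟨(i x, j x), mem_triangle.mpr (hij x)⟩,
    (measurable_of_countable e).comp (hi.prodMk hj).subtype_mk, fun x y hxy => ?_⟩
  obtain ⟨m, hm, rfl⟩ := (hsf x y).mp hxy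
  exact fun h => hne m x hm (congrArg Subtype.val (e.injective h)).symm

theorem borel_chromatic_of_bounded_outdegree_general {X : Type*} [MeasurableSpace X]
    [StandardBorelSpace X] (n : ℕ)
    (D : Set (X × X)) (hDmeas : MeasurableSet D)
    (hdeg : ∀ x : X, {y | (x, y) ∈ D}.Finite ∧ {y | (x, y) ∈ D}.ncard ≤ n)
    (hfin : ∃ k : ℕ, ∃ c : X → Fin k, Measurable c ∧
      ∀ x y : X, ((x, y) ∈ D ∨ (y, x) ∈ D) → c x ≠ c y) :
    ∃ c : X → Fin ((n + 1) * (n + 2) / 2), Measurable c ∧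
      ∀ x y : X, ((x, y) ∈ D ∨ (y, x) ∈ D) → c x ≠ c y := by
  obtain ⟨k, c, hc, hcD⟩ := hfin
  rcases isEmpty_or_nonempty X with _ | _
  · exact ⟨isEmptyElim, Subsingleton.measurable, fun x => isEmptyElim x⟩
  obtain ⟨c', hc', hc'D⟩ := (isUnionOfMeasurableGraphs_of_ncard_le hDmeas (fun x => (hdeg x).1)
    fun x => (hdeg x).2).exists_measurable_coloring c hc fun x y h => hcD x y (Or.inl h)
  exact ⟨c', hc', fun x y h => h.elim (hc'D x y) fun h' => (hc'D y x h').symm⟩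

/-- **Theorem (Palamourdas' bound).** Let `X` be a standard Borel space and `D` a locally
countable Borel directed graph on `X` in which every vertex has at most `n` out-neighbors.
Then the Borel chromatic number of the underlying graph of `D` is either infinite or at
most `(n+1)(n+2)/2`; that is, if it is finite then there is a Borel proper coloring with
`(n+1)(n+2)/2` colors. -/
theorem borel_chromatic_of_bounded_outdegree {X : Type*} [MeasurableSpace X]
    [StandardBorelSpace X] (n : ℕ)
    (D : Set (X × X)) (hDmeas : MeasurableSet D)
    (hirr : ∀ x : X, (x, x) ∉ D)
    (hloc : ∀ x : X, {y | (x, y) ∈ D}.Countable ∧ {y | (y, x) ∈ D}.Countable)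
    (hdeg : ∀ x : X, {y | (x, y) ∈ D}.Finite ∧ {y | (x, y) ∈ D}.ncard ≤ n)
    (hfin : ∃ k : ℕ, ∃ c : X → Fin k, Measurable c ∧
      ∀ x y : X, ((x, y) ∈ D ∨ (y, x) ∈ D) → c x ≠ c y) :
    ∃ c : X → Fin ((n + 1) * (n + 2) / 2), Measurable c ∧
      ∀ x y : X, ((x, y) ∈ D ∨ (y, x) ∈ D) → c x ≠ c y :=
  borel_chromatic_of_bounded_outdegree_general n D hDmeas hdeg hfin
end

section
/- Let X be a standard Borel space and D a locally countable Borel directed graph on X with bounded out-degree n whose underlying graph has finite Borel chromatic number. Then there is a Borel set M ⊆ X such that the underlying graph of the induced subgraph D[M] has Borel chromatic number at most n+1, and ρ(x, M) ≤ 1 for all x ∈ X (i.e., every vertex is in M or has an out-neighbor in M), where ρ denotes directed distance in D. -/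
open Set

section Aux

variable {X : Type*} [MeasurableSpace X] [StandardBorelSpace X]

/-- Uniqueness of strictly monotone enumerations with the same range. -/
lemma strictMono_range_eq {m : ℕ} {f g : Fin m → ℝ} (hf : StrictMono f) (hg : StrictMono g)
    (h : Set.range f = Set.range g) : f = g := by
  haveI : WellFoundedLT (Fin m) := inferInstance
  exact (hf.range_inj hg).mp h

/-- Existence of a strictly monotone (w.r.t. an injection into `ℝ`) enumeration of `m` points
of a finite set of cardinality at least `m`. -/
lemma exists_strictMono_enum {e : X → ℝ} (he : Function.Injective e) {S : Set X} {m : ℕ}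
    (hfin : S.Finite) (hcard : m ≤ S.ncard) :
    ∃ f : Fin m → X, StrictMono (fun i => e (f i)) ∧ ∀ i, f i ∈ S := by
  classical
  obtain ⟨t, hts, htc⟩ := Finset.exists_subset_card_eq
    (s := hfin.toFinset) (n := m) (by rwa [← Set.ncard_eq_toFinset_card S hfin])
  set s : Finset ℝ := t.image e with hs
  have hcard' : s.card = m := by
    rw [hs, Finset.card_image_of_injective _ he, htc]
  have hmem : ∀ i : Fin m, ∃ y ∈ t, e y = s.orderEmbOfFin hcard' i := by
    intro i
    exact Finset.mem_image.mp (s.orderEmbOfFin_mem hcard' i)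
  choose f hft hfe using hmem
  refine ⟨f, ?_, ?_⟩
  · have : (fun i => e (f i)) = fun i => s.orderEmbOfFin hcard' i := funext fun i => hfe i
    rw [this]
    exact (s.orderEmbOfFin hcard').strictMono
  · intro i
    have := hts (hft i)
    rwa [Set.Finite.mem_toFinset] at this

/-- Luzin–Novikov style projection lemma: the first-coordinate projection of a Borel subset of
`X × X` with uniformly finite sections is Borel. -/
lemma measurableSet_fst_image : ∀ (m : ℕ) (R : Set (X × X)), MeasurableSet R →
    (∀ x : X, {y | (x, y) ∈ R}.Finite ∧ {y | (x, y) ∈ R}.ncard ≤ m) →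
    MeasurableSet (Prod.fst '' R) := by
  classical
  intro m
  induction m with
  | zero =>
    intro R hR hsec
    have hRe : R = ∅ := by
      ext ⟨x, y⟩
      simp only [Set.mem_empty_iff_false, iff_false]
      intro hxy
      have h0 : {y | (x, y) ∈ R} = ∅ :=
        (Set.ncard_eq_zero (hsec x).1).mp (Nat.le_zero.mp (hsec x).2)
      have hy : y ∈ {y | (x, y) ∈ R} := hxy
      rw [h0] at hy
      exact hy
    rw [hRe]
    simp only [Set.image_empty]
    exact MeasurableSet.empty
  | succ m ih =>
    intro R hR hsec
    obtain ⟨e, he⟩ := MeasureTheory.exists_measurableEmbedding_real X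
    set T : Set (X × (Fin (m + 1) → X)) :=
      {p | StrictMono (fun i => e (p.2 i)) ∧ ∀ i, (p.1, p.2 i) ∈ R} with hTdef
    have hT : MeasurableSet T := by
      have h1 : MeasurableSet {p : X × (Fin (m + 1) → X) | StrictMono (fun i => e (p.2 i))} := by
        have : {p : X × (Fin (m + 1) → X) | StrictMono (fun i => e (p.2 i))} =
            ⋂ (q : Fin (m + 1) × Fin (m + 1)), {p | q.1 < q.2 → e (p.2 q.1) < e (p.2 q.2)} := by
          ext p
          simp only [Set.mem_setOf_eq, Set.mem_iInter, StrictMono, Prod.forall]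
        rw [this]
        refine MeasurableSet.iInter fun q => ?_
        by_cases hq : q.1 < q.2
        · simp only [hq, true_implies]
          exact measurableSet_lt
            (he.measurable.comp ((measurable_pi_apply q.1).comp measurable_snd))
            (he.measurable.comp ((measurable_pi_apply q.2).comp measurable_snd))
        · simp only [hq, false_implies, Set.setOf_true]
          exact MeasurableSet.univ
      have h2 : MeasurableSet {p : X × (Fin (m + 1) → X) | ∀ i, (p.1, p.2 i) ∈ R} := by
        have : {p : X × (Fin (m + 1) → X) | ∀ i, (p.1, p.2 i) ∈ R} =
            ⋂ i, (fun p : X × (Fin (m + 1) → X) => (p.1, p.2 i)) ⁻¹' R := by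
          ext p; simp [Set.mem_iInter]
        rw [this]
        exact MeasurableSet.iInter fun i => hR.preimage
          (measurable_fst.prodMk ((measurable_pi_apply i).comp measurable_snd))
      exact h1.inter h2
    have hinj : Set.InjOn Prod.fst T := by
      rintro ⟨x, f⟩ ⟨hf1, hf2⟩ ⟨x', g⟩ ⟨hg1, hg2⟩ (hxx : x = x')
      subst hxx
      have key : ∀ (f : Fin (m + 1) → X), StrictMono (fun i => e (f i)) →
          (∀ i, (x, f i) ∈ R) → Set.range f = {y | (x, y) ∈ R} := by
        intro f hf1 hf2
        have hfi : Function.Injective f := fun a b hab =>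
          hf1.injective (by simp [hab])
        have hsub : Set.range f ⊆ {y | (x, y) ∈ R} := by
          rintro _ ⟨i, rfl⟩; exact hf2 i
        have hcardf : (Set.range f).ncard = m + 1 := by
          rw [show Set.range f = ↑(Finset.univ.image f) by simp,
            Set.ncard_coe_finset, Finset.card_image_of_injective _ hfi,
            Finset.card_univ, Fintype.card_fin]
        exact Set.eq_of_subset_of_ncard_le hsub (by rw [hcardf]; exact (hsec x).2) (hsec x).1
      have hrange : Set.range (fun i => e (f i)) = Set.range (fun i => e (g i)) := by
        have h1 := key f hf1 hf2
        have h2 := key g hg1 hg2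
        have : Set.range f = Set.range g := h1.trans h2.symm
        rw [show (fun i => e (f i)) = e ∘ f from rfl, show (fun i => e (g i)) = e ∘ g from rfl,
          Set.range_comp, Set.range_comp, this]
      have := strictMono_range_eq hf1 hg1 hrange
      have hfg : f = g := funext fun i => he.injective (congrFun this i)
      simp [hfg]
    set C : Set X := Prod.fst '' T with hCdef
    have hC : MeasurableSet C := hT.image_of_measurable_injOn measurable_fst hinj
    set R₂ : Set (X × X) := R ∩ {p | p.1 ∉ C} with hR₂def
    have hR₂ : MeasurableSet R₂ := hR.inter (hC.compl.preimage measurable_fst)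
    have hsec₂ : ∀ x : X, {y | (x, y) ∈ R₂}.Finite ∧ {y | (x, y) ∈ R₂}.ncard ≤ m := by
      intro x
      by_cases hx : x ∈ C
      · have : {y | (x, y) ∈ R₂} = ∅ := by
          ext y; simp [hR₂def, hx]
        simp [this]
      · have hsub : {y | (x, y) ∈ R₂} = {y | (x, y) ∈ R} := by
          ext y; simp [hR₂def, hx]
        rw [hsub]
        refine ⟨(hsec x).1, ?_⟩
        by_contra hlt
        push_neg at hlt
        have hcard : m + 1 ≤ {y | (x, y) ∈ R}.ncard := hlt
        obtain ⟨f, hf1, hf2⟩ := exists_strictMono_enum he.injective (hsec x).1 hcard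
        exact hx ⟨(x, f), ⟨hf1, fun i => hf2 i⟩, rfl⟩
    have him : Prod.fst '' R = C ∪ Prod.fst '' R₂ := by
      ext x
      constructor
      · rintro ⟨⟨x', y⟩, hy, rfl⟩
        by_cases hx : x' ∈ C
        · exact Or.inl hx
        · exact Or.inr ⟨(x', y), ⟨hy, hx⟩, rfl⟩
      · rintro (hx | ⟨⟨x', y⟩, ⟨hy, _⟩, rfl⟩)
        · obtain ⟨⟨x', f⟩, ⟨_, h2⟩, rfl⟩ := hx
          exact ⟨(x', f 0), h2 0, rfl⟩
        · exact ⟨(x', y), hy, rfl⟩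
    rw [him]
    exact hC.union (ih R₂ hR₂ hsec₂)

end Aux

lemma measurable_comp_bool_vec {α : Type*} [MeasurableSpace α] {q r : ℕ}
    {g : α → (Fin q → Bool)} (hg : ∀ j, Measurable fun x => g x j) (F : (Fin q → Bool) → Fin r) :
    Measurable fun x => F (g x) := by
  apply measurable_to_countable'
  intro y
  have heq : (fun x => F (g x)) ⁻¹' {y} =
      ⋃ (v : Fin q → Bool) (_ : F v = y), ⋂ j, {x | g x j = v j} := by
    ext x
    simp only [Set.mem_preimage, Set.mem_singleton_iff, Set.mem_iUnion, Set.mem_iInter,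
      Set.mem_setOf_eq]
    constructor
    · intro h; exact ⟨g x, h, fun j => rfl⟩
    · rintro ⟨v, hv, hvj⟩
      have : g x = v := funext hvj
      rw [this]; exact hv
  rw [heq]
  exact MeasurableSet.iUnion fun v => MeasurableSet.iUnion fun _ =>
    MeasurableSet.iInter fun j => (hg j) (measurableSet_singleton (v j))

lemma measurable_decide_mem {α : Type*} [MeasurableSpace α] {A : Set α}
    [∀ x, Decidable (x ∈ A)] (hA : MeasurableSet A) :
    Measurable fun x => decide (x ∈ A) := by
  apply measurable_to_countable'
  intro b
  cases b
  · have : (fun x => decide (x ∈ A)) ⁻¹' {false} = Aᶜ := by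
      ext x; simp [decide_eq_false_iff_not]
    rw [this]; exact hA.compl
  · have : (fun x => decide (x ∈ A)) ⁻¹' {true} = A := by
      ext x; simp
    rw [this]; exact hA

set_option maxHeartbeats 1000000 in
/-- **Theorem (Borel domination with small induced chromatic number).** Let `X` be a
standard Borel space and `D` a locally countable Borel directed graph on `X` with bounded
out-degree `n` whose underlying graph has finite Borel chromatic number. Then there is a
Borel set `M` such that the underlying graph of the induced subgraph `D[M]` has Borel
chromatic number at most `n + 1` (witnessed by a Borel coloring that is proper on `M`),
and every vertex is in `M` or has an out-neighbor in `M`. -/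
theorem borel_dominating_set_of_bounded_outdegree {X : Type*} [MeasurableSpace X]
    [StandardBorelSpace X] (n : ℕ)
    (D : Set (X × X)) (hDmeas : MeasurableSet D)
    (hirr : ∀ x : X, (x, x) ∉ D)
    (hloc : ∀ x : X, {y | (x, y) ∈ D}.Countable ∧ {y | (y, x) ∈ D}.Countable)
    (hdeg : ∀ x : X, {y | (x, y) ∈ D}.Finite ∧ {y | (x, y) ∈ D}.ncard ≤ n)
    (hfin : ∃ k : ℕ, ∃ c : X → Fin k, Measurable c ∧
      ∀ x y : X, ((x, y) ∈ D ∨ (y, x) ∈ D) → c x ≠ c y) :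
    ∃ M : Set X, MeasurableSet M ∧
      (∃ c : X → Fin (n + 1), Measurable c ∧
        ∀ x ∈ M, ∀ y ∈ M, ((x, y) ∈ D ∨ (y, x) ∈ D) → c x ≠ c y) ∧
      (∀ x : X, x ∈ M ∨ ∃ y ∈ M, (x, y) ∈ D) := by
  classical
  obtain ⟨k, c, hc, hcprop⟩ := hfin
  -- Projection corollary: sets of vertices with an out-neighbour in a Borel set are Borel.
  have projD : ∀ B : Set X, MeasurableSet B →
      MeasurableSet {x | ∃ y, (x, y) ∈ D ∧ y ∈ B} := by
    intro B hB
    have heq : {x | ∃ y, (x, y) ∈ D ∧ y ∈ B} = Prod.fst '' (D ∩ {p | p.2 ∈ B}) := by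
      ext x
      constructor
      · rintro ⟨y, h1, h2⟩; exact ⟨(x, y), ⟨h1, h2⟩, rfl⟩
      · rintro ⟨⟨x', y⟩, ⟨h1, h2⟩, rfl⟩; exact ⟨y, h1, h2⟩
    rw [heq]
    apply measurableSet_fst_image n _ (hDmeas.inter (hB.preimage measurable_snd))
    intro x
    have hsub : {y | (x, y) ∈ D ∩ {p | p.2 ∈ B}} ⊆ {y | (x, y) ∈ D} := fun y hy => hy.1
    exact ⟨(hdeg x).1.subset hsub,
      le_trans (Set.ncard_le_ncard hsub (hdeg x).1) (hdeg x).2⟩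
  -- The greedy dominating set, built along the colour classes.
  let W : ℕ → Set X := fun i => Nat.rec ∅
    (fun i Wi => Wi ∪ ({x | (c x : ℕ) = i} ∩ {x | ∃ y, (x, y) ∈ D ∧ y ∈ Wi}ᶜ)) i
  have hW0 : W 0 = ∅ := rfl
  have hWs : ∀ i, W (i + 1) =
      W i ∪ ({x | (c x : ℕ) = i} ∩ {x | ∃ y, (x, y) ∈ D ∧ y ∈ W i}ᶜ) := fun i => rfl
  have hWmeas : ∀ i, MeasurableSet (W i) := by
    intro i
    induction i with
    | zero => exact MeasurableSet.empty
    | succ i ihW =>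
      rw [hWs i]
      have h1 : MeasurableSet {x | (c x : ℕ) = i} :=
        hc ((Set.to_countable {w : Fin k | (w : ℕ) = i}).measurableSet)
      exact ihW.union (h1.inter (projD _ ihW).compl)
  have hWmono : ∀ {i j : ℕ}, i ≤ j → W i ⊆ W j := by
    intro i j hij
    exact monotone_nat_of_le_succ (f := W)
      (fun i => by rw [hWs i]; exact Set.subset_union_left) hij
  have key1 : ∀ j x, x ∈ W j → ¬∃ y, (x, y) ∈ D ∧ y ∈ W (c x : ℕ) := by
    intro j
    induction j with
    | zero => intro x hx; rw [hW0] at hx; exact absurd hx (Set.notMem_empty x)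
    | succ j ihW =>
      intro x hx
      rw [hWs j] at hx
      rcases hx with hx | ⟨hcx, hno⟩
      · exact ihW x hx
      · rw [Set.mem_compl_iff] at hno
        rw [show ((c x : ℕ)) = j from hcx]
        exact hno
  have key2 : ∀ j x, x ∈ W j → x ∈ W ((c x : ℕ) + 1) := by
    intro j
    induction j with
    | zero => intro x hx; rw [hW0] at hx; exact absurd hx (Set.notMem_empty x)
    | succ j ihW =>
      intro x hx
      rw [hWs j] at hx
      rcases hx with hx | ⟨hcx, hno⟩
      · exact ihW x hx
      · rw [show ((c x : ℕ)) = j from hcx, hWs j]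
        exact Set.mem_union_right _ ⟨hcx, hno⟩
  set M : Set X := W k with hMdef
  have hMmeas : MeasurableSet M := hWmeas k
  -- Domination.
  have hdom : ∀ x : X, x ∈ M ∨ ∃ y ∈ M, (x, y) ∈ D := by
    intro x
    rcases Classical.em (x ∈ M) with hx | hx
    · exact Or.inl hx
    · right
      have hik : (c x : ℕ) < k := (c x).isLt
      have hx' : x ∉ W ((c x : ℕ) + 1) :=
        fun h => hx (hWmono (i := (c x : ℕ) + 1) (j := k) (by omega) h)
      rw [hWs] at hx'
      have h2 : x ∉ {x | (c x : ℕ) = (c x : ℕ)} ∩ {x | ∃ y, (x, y) ∈ D ∧ y ∈ W (c x : ℕ)}ᶜ :=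
        fun h => hx' (Set.mem_union_right _ h)
      have h3 : ¬ x ∈ {x | ∃ y, (x, y) ∈ D ∧ y ∈ W (c x : ℕ)}ᶜ := fun h => h2 ⟨rfl, h⟩
      rw [Set.mem_compl_iff, not_not] at h3
      obtain ⟨y, hy1, hy2⟩ := h3
      exact ⟨y, hWmono (i := (c x : ℕ)) (j := k) (by omega) hy2, hy1⟩
  -- Edges inside `M` strictly ascend in colour.
  have hasc : ∀ x ∈ M, ∀ y ∈ M, (x, y) ∈ D → (c x : ℕ) < (c y : ℕ) := by
    intro x hx y hy hxy
    have hne : c x ≠ c y := hcprop x y (Or.inl hxy)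
    have hvne : (c x : ℕ) ≠ (c y : ℕ) := fun h => hne (Fin.val_injective h)
    rcases lt_or_gt_of_ne hvne with h | h
    · exact h
    · exfalso
      have hy' : y ∈ W ((c y : ℕ) + 1) := key2 k y hy
      have hy'' : y ∈ W (c x : ℕ) := hWmono (i := (c y : ℕ) + 1) (j := (c x : ℕ)) (by omega) hy'
      exact key1 k x hx ⟨y, hxy, hy''⟩
  -- The greedy choice function for colours.
  let F : (Fin (n + 1) → Bool) → Fin (n + 1) := fun v =>
    if h : (Finset.univ.filter (fun j => v j = false)).Nonempty then
      (Finset.univ.filter (fun j => v j = false)).min' h else 0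
  have hF : ∀ v : Fin (n + 1) → Bool, (∃ j, v j = false) → v (F v) = false := by
    rintro v ⟨j, hj⟩
    have hne : (Finset.univ.filter (fun j => v j = false)).Nonempty :=
      ⟨j, Finset.mem_filter.mpr ⟨Finset.mem_univ _, hj⟩⟩
    have hmem := Finset.min'_mem _ hne
    have hFeq : F v = (Finset.univ.filter (fun j => v j = false)).min' hne := dif_pos hne
    rw [hFeq]
    exact (Finset.mem_filter.mp hmem).2
  -- The colouring, built by downward recursion on colour classes.
  let Aset : (X → Fin (n + 1)) → ℕ → Fin (n + 1) → Set X := fun g t j =>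
    {x | ∃ y, (x, y) ∈ D ∧ y ∈ M ∧ k - (t + 1) < (c y : ℕ) ∧ g y = j}
  have hAdef : ∀ g t j, Aset g t j =
      {x | ∃ y, (x, y) ∈ D ∧ y ∈ M ∧ k - (t + 1) < (c y : ℕ) ∧ g y = j} := fun _ _ _ => rfl
  let fc : ℕ → X → Fin (n + 1) := fun t => Nat.rec (motive := fun _ => X → Fin (n + 1))
    (fun _ => (0 : Fin (n + 1)))
    (fun t g x => if (c x : ℕ) = k - (t + 1) then
      F (fun j => @decide (x ∈ Aset g t j) (Classical.propDecidable _)) else g x) t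
  have hfcs : ∀ t x, fc (t + 1) x = if (c x : ℕ) = k - (t + 1) then
      F (fun j => @decide (x ∈ Aset (fc t) t j) (Classical.propDecidable _)) else fc t x := fun _ _ => rfl
  have hAmeas : ∀ (g : X → Fin (n + 1)), Measurable g → ∀ t j, MeasurableSet (Aset g t j) := by
    intro g hg t j
    have heq : Aset g t j =
        {x | ∃ y, (x, y) ∈ D ∧ y ∈ (M ∩ {z | k - (t + 1) < (c z : ℕ)} ∩ g ⁻¹' {j})} := by
      rw [hAdef]
      ext x
      simp only [Set.mem_setOf_eq, Set.mem_inter_iff, Set.mem_preimage,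
        Set.mem_singleton_iff]
      tauto
    rw [heq]
    have h1 : MeasurableSet {z | k - (t + 1) < (c z : ℕ)} :=
      hc ((Set.to_countable {w : Fin k | k - (t + 1) < (w : ℕ)}).measurableSet)
    exact projD _ ((hMmeas.inter h1).inter (hg (measurableSet_singleton j)))
  have hfcmeas : ∀ t, Measurable (fc t) := by
    intro t
    induction t with
    | zero => exact measurable_const
    | succ t iht =>
      have heq : fc (t + 1) = fun x => if (c x : ℕ) = k - (t + 1) then
          F (fun j => @decide (x ∈ Aset (fc t) t j) (Classical.propDecidable _)) else fc t x := funext (hfcs t)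
      rw [heq]
      refine Measurable.ite ?_ ?_ iht
      · exact hc ((Set.to_countable {w : Fin k | (w : ℕ) = k - (t + 1)}).measurableSet)
      · exact measurable_comp_bool_vec
          (fun j => @measurable_decide_mem X _ (Aset (fc t) t j)
            (fun _ => Classical.propDecidable _) (hAmeas _ iht t j)) F
  -- Stability of the colouring.
  have hstab : ∀ (x : X) (s t : ℕ), k - (c x : ℕ) ≤ s → s ≤ t → t ≤ k → fc s x = fc t x := by
    intro x s t hks hst htk
    induction t, hst using Nat.le_induction with
    | base => rfl
    | succ t ht iht =>
      have hlt : (c x : ℕ) < k := (c x).isLt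
      rw [hfcs t x, if_neg (by omega)]
      exact iht (by omega)
  -- Properness of the colouring on `M`, for directed edges.
  have hcolor : ∀ x ∈ M, ∀ y ∈ M, (x, y) ∈ D → fc k x ≠ fc k y := by
    intro x hx y hy hxy
    have hix : (c x : ℕ) < k := (c x).isLt
    have hjy : (c y : ℕ) < k := (c y).isLt
    have hij : (c x : ℕ) < (c y : ℕ) := hasc x hx y hy hxy
    set t := k - ((c x : ℕ) + 1) with ht
    have hcx : (c x : ℕ) = k - (t + 1) := by omega
    have e1 : fc (t + 1) x = fc k x := hstab x (t + 1) k (by omega) (by omega) le_rfl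
    have e2 : fc (t + 1) x = F (fun j => @decide (x ∈ Aset (fc t) t j) (Classical.propDecidable _)) := by
      rw [hfcs t x, if_pos hcx]
    have hex : ∃ j, (fun j => @decide (x ∈ Aset (fc t) t j) (Classical.propDecidable _)) j = false := by
      by_contra hcon
      push_neg at hcon
      simp only [ne_eq, Bool.not_eq_false, decide_eq_true_eq] at hcon
      have hall : ∀ j : Fin (n + 1),
          ∃ y, (x, y) ∈ D ∧ y ∈ M ∧ k - (t + 1) < (c y : ℕ) ∧ fc t y = j := by
        intro j
        have := hcon j
        rwa [hAdef, Set.mem_setOf_eq] at this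
      choose w hw1 hw2 hw3 hw4 using hall
      have hwinj : Function.Injective w := fun a b hab => by
        rw [← hw4 a, ← hw4 b, hab]
      have hsub : ↑(Finset.univ.image w) ⊆ {y | (x, y) ∈ D} := by
        intro z hz
        simp only [Finset.coe_image, Finset.coe_univ, Set.image_univ] at hz
        obtain ⟨j, rfl⟩ := hz
        exact hw1 j
      have hcard : n + 1 ≤ {y | (x, y) ∈ D}.ncard := by
        have h1 := Set.ncard_le_ncard hsub (hdeg x).1
        rwa [Set.ncard_coe_finset, Finset.card_image_of_injective _ hwinj,
          Finset.card_univ, Fintype.card_fin] at h1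
      have := (hdeg x).2
      omega
    have hFv := hF _ hex
    rw [decide_eq_false_iff_not] at hFv
    intro heq
    apply hFv
    have e3 : fc t y = fc k y := hstab y t k (by omega) (by omega) le_rfl
    rw [hAdef, Set.mem_setOf_eq]
    exact ⟨y, hxy, hy, by omega, by rw [e3, ← heq, ← e1, e2]⟩
  exact ⟨M, hMmeas, ⟨fc k, hfcmeas k, fun x hx y hy hadj =>
    hadj.elim (fun h => hcolor x hx y hy h) (fun h => (hcolor y hy x hx h).symm)⟩, hdom⟩
end

section
/- Let X be a standard Borel space and D a locally countable Borel directed graph on X in which every vertex has at most one out-neighbor, and suppose the underlying graph of D has finite Borel chromatic number. Then there is a Borel set M ⊆ X such that the underlying graph of the induced subgraph D[M] has Borel chromatic number at most 2, and every vertex of X is in M or has an out-neighbor in M. -/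
/-- **Theorem (bounded out-degree 1 case).** Let `X` be a standard Borel space and `D` a
locally countable Borel directed graph on `X` in which every vertex has at most one
out-neighbor, and suppose the underlying graph of `D` has finite Borel chromatic number.
Then there is a Borel set `M` such that the underlying graph of the induced subgraph
`D[M]` has Borel chromatic number at most `2` (witnessed by a Borel coloring that is
proper on `M`), and every vertex is in `M` or has an out-neighbor in `M`. -/
theorem borel_dominating_set_of_outdegree_one {X : Type*} [MeasurableSpace X]
    [StandardBorelSpace X]
    (D : Set (X × X)) (hDmeas : MeasurableSet D)
    (hirr : ∀ x : X, (x, x) ∉ D)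
    (hloc : ∀ x : X, {y | (x, y) ∈ D}.Countable ∧ {y | (y, x) ∈ D}.Countable)
    (hdeg : ∀ x y z : X, (x, y) ∈ D → (x, z) ∈ D → y = z)
    (hfin : ∃ k : ℕ, ∃ c : X → Fin k, Measurable c ∧
      ∀ x y : X, ((x, y) ∈ D ∨ (y, x) ∈ D) → c x ≠ c y) :
    ∃ M : Set X, MeasurableSet M ∧
      (∃ c : X → Fin 2, Measurable c ∧
        ∀ x ∈ M, ∀ y ∈ M, ((x, y) ∈ D ∨ (y, x) ∈ D) → c x ≠ c y) ∧
      (∀ x : X, x ∈ M ∨ ∃ y ∈ M, (x, y) ∈ D) := by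
  classical
  obtain ⟨k, c, hc, hcp⟩ := hfin
  haveI : StandardBorelSpace ↥D := hDmeas.standardBorel
  -- the "first projection" embedding of D into X
  set e : ↥D → X := fun p => (p : X × X).1 with he_def
  have he_meas : Measurable e := measurable_fst.comp measurable_subtype_coe
  have he_inj : Function.Injective e := by
    rintro ⟨⟨x, y⟩, hp⟩ ⟨⟨x', y'⟩, hq⟩ h
    simp only [e] at h
    subst h
    have := hdeg x y y' hp hq
    subst this
    rfl
  have hemb : MeasurableEmbedding e := he_meas.measurableEmbedding he_inj
  set dom : Set X := Set.range e with hdom_def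
  have hdom : MeasurableSet dom := hemb.measurableSet_range
  set F : X → X := Function.extend e (fun p => (p : X × X).2) id with hF_def
  have hF : Measurable F :=
    hemb.measurable_extend (measurable_snd.comp measurable_subtype_coe) measurable_id
  -- basic facts about F and dom
  have hFD : ∀ x y : X, (x, y) ∈ D → x ∈ dom ∧ F x = y := by
    intro x y hxy
    refine ⟨⟨⟨(x, y), hxy⟩, rfl⟩, ?_⟩
    have : F (e ⟨(x, y), hxy⟩) = y := he_inj.extend_apply _ _ _
    exact this
  have hdomF : ∀ x ∈ dom, (x, F x) ∈ D := by
    rintro x ⟨p, rfl⟩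
    have : F (e p) = (p : X × X).2 := he_inj.extend_apply _ _ _
    rw [this]
    exact p.2
  -- the removed set I and M
  set I : Set X := {x | x ∈ dom ∧ c x < c (F x) ∧ (F x ∉ dom ∨ c (F (F x)) < c (F x))}
    with hI_def
  set M : Set X := Iᶜ with hM_def
  have hlt : ∀ f g : X → Fin k, Measurable f → Measurable g →
      MeasurableSet {x | f x < g x} := by
    intro f g hf hg
    have : {x | f x < g x} =
        (fun x => (f x, g x)) ⁻¹' {p : Fin k × Fin k | p.1 < p.2} := rfl
    rw [this]
    exact (hf.prodMk hg) ((Set.to_countable _).measurableSet)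
  have hIm : MeasurableSet I := by
    have h1 : MeasurableSet {x : X | c x < c (F x)} := hlt _ _ hc (hc.comp hF)
    have h2 : MeasurableSet {x : X | c (F (F x)) < c (F x)} :=
      hlt _ _ (hc.comp (hF.comp hF)) (hc.comp hF)
    have : I = dom ∩ ({x : X | c x < c (F x)} ∩
        ((F ⁻¹' domᶜ) ∪ {x : X | c (F (F x)) < c (F x)})) := by
      ext x; simp [hI_def]; tauto
    rw [this]
    exact hdom.inter (h1.inter ((hF hdom.compl).union h2))
  have hMm : MeasurableSet M := hIm.compl
  -- domination
  have hdomin : ∀ x : X, x ∈ M ∨ ∃ y ∈ M, (x, y) ∈ D := by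
    intro x
    by_cases hx : x ∈ M
    · exact Or.inl hx
    · right
      have hxI : x ∈ I := not_not.mp hx
      obtain ⟨hxd, hlt1, hthird⟩ := hxI
      refine ⟨F x, ?_, hdomF x hxd⟩
      intro hFI
      obtain ⟨hFd, hlt2, _⟩ := hFI
      rcases hthird with h | h
      · exact h hFd
      · exact absurd hlt2 (not_lt.mpr h.le)
  -- the stopping set
  set Sset : Set X := domᶜ ∪ (F ⁻¹' Iᶜᶜ ∪ Iᶜᶜ) with hS_def
  have hSm : MeasurableSet Sset := hdom.compl.union ((hF hIm.compl.compl).union hIm.compl.compl)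
  have hSmem : ∀ x : X, x ∈ Sset ↔ (x ∉ dom ∨ F x ∉ M ∨ x ∉ M) := by
    intro x
    simp [hS_def, hM_def]
  -- key lemma: the forward orbit always reaches Sset
  have hkey : ∀ x : X, ∃ j : ℕ, F^[j] x ∈ Sset := by
    intro x
    by_contra hcon
    push_neg at hcon
    have hall : ∀ j : ℕ, F^[j] x ∈ dom ∧ F^[j] x ∈ M ∧ F^[j+1] x ∈ M := by
      intro j
      have := hcon j
      rw [hSmem] at this
      push_neg at this
      refine ⟨this.1, this.2.2, ?_⟩
      have := this.2.1
      rwa [Function.iterate_succ_apply' F j x]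
    have hedge : ∀ j : ℕ, (F^[j] x, F^[j+1] x) ∈ D := by
      intro j
      rw [Function.iterate_succ_apply' F j x]
      exact hdomF _ (hall j).1
    set d : ℕ → Fin k := fun j => c (F^[j] x) with hd_def
    have hne : ∀ j, d j ≠ d (j + 1) := fun j => hcp _ _ (Or.inl (hedge j))
    have hstep : ∀ j, d j < d (j + 1) → d (j + 1) < d (j + 2) := by
      intro j hj
      have hjM : F^[j] x ∈ M := (hall j).2.1
      have hjd : F^[j] x ∈ dom := (hall j).1
      by_contra hcon2
      apply hjM
      refine ⟨hjd, ?_, ?_⟩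
      · rw [← Function.iterate_succ_apply' F j x]; exact hj
      · right
        rw [← Function.iterate_succ_apply' F j x,
            ← Function.iterate_succ_apply' F (j+1) x]
        exact lt_of_le_of_ne (not_lt.mp hcon2) (hne (j+1)).symm
    by_cases hinc : ∃ j₀, d j₀ < d (j₀ + 1)
    · obtain ⟨j₀, hj₀⟩ := hinc
      have hmono : ∀ i : ℕ, (d j₀).val + i ≤ (d (j₀ + i)).val := by
        intro i
        induction i with
        | zero => simp
        | succ n ih =>
          have hinc' : ∀ i : ℕ, d (j₀ + i) < d (j₀ + i + 1) := by
            intro i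
            induction i with
            | zero => simpa using hj₀
            | succ m ihm => exact hstep _ ihm
          have := hinc' n
          have hv : (d (j₀ + n)).val < (d (j₀ + n + 1)).val := this
          have : j₀ + (n + 1) = j₀ + n + 1 := by ring
          rw [this]
          omega
      have := hmono k
      have hvk : (d (j₀ + k)).val < k := (d (j₀ + k)).isLt
      omega
    · push_neg at hinc
      have hdec : ∀ j, d (j + 1) < d j := fun j =>
        lt_of_le_of_ne (hinc j) (hne j).symm
      have hmono : ∀ i : ℕ, (d i).val + i ≤ (d 0).val := by
        intro i
        induction i with
        | zero => simp
        | succ n ih =>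
          have hv : (d (n + 1)).val < (d n).val := hdec n
          omega
      have := hmono k
      have hvk : (d 0).val < k := (d 0).isLt
      omega
  -- the rank function
  set n : X → ℕ := fun x => sInf {j | F^[j] x ∈ Sset} with hn_def
  have hnmem : ∀ x : X, F^[n x] x ∈ Sset := by
    intro x
    exact Nat.sInf_mem (hkey x)
  have hnmin : ∀ (x : X) (i : ℕ), i < n x → F^[i] x ∉ Sset := by
    intro x i hi
    exact Nat.notMem_of_lt_sInf hi
  have hrec : ∀ x : X, x ∉ Sset → n x = n (F x) + 1 := by
    intro x hx
    have hB : F^[n (F x)] (F x) ∈ Sset := hnmem (F x)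
    have h1 : n x ≤ n (F x) + 1 := by
      apply Nat.sInf_le
      show F^[n (F x) + 1] x ∈ Sset
      rwa [Function.iterate_succ_apply F _ x]
    have h0 : n x ≠ 0 := by
      intro h
      have := hnmem x
      rw [h] at this
      exact hx this
    have h2 : n (F x) ≤ n x - 1 := by
      apply Nat.sInf_le
      have := hnmem x
      show F^[n x - 1] (F x) ∈ Sset
      rw [← Function.iterate_succ_apply F _ x]
      rw [Nat.succ_eq_add_one]
      have : n x - 1 + 1 = n x := by omega
      rw [this]
      exact hnmem x
    omega
  have hnmeas : Measurable n := by
    apply measurable_to_countable'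
    intro j
    have : n ⁻¹' {j} = {x | F^[j] x ∈ Sset} ∩ ⋂ i ∈ Finset.range j, {x | F^[i] x ∉ Sset} := by
      ext x
      simp only [Set.mem_preimage, Set.mem_singleton_iff, Set.mem_inter_iff, Set.mem_setOf_eq,
        Set.mem_iInter, Finset.mem_range]
      constructor
      · rintro rfl
        exact ⟨hnmem x, fun i hi => hnmin x i hi⟩
      · rintro ⟨hj, hmin⟩
        have h1 : n x ≤ j := Nat.sInf_le hj
        have h2 : ¬ n x < j := fun h => (hmin _ h) (hnmem x)
        omega
    rw [this]
    refine (hSm.preimage (hF.iterate j)).inter ?_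
    exact MeasurableSet.biInter (Set.to_countable _)
      (fun i _ => (hSm.preimage (hF.iterate i)).compl)
  -- the 2-coloring
  set c₂ : X → Fin 2 := fun x => (⟨n x % 2, Nat.mod_lt _ (by norm_num)⟩ : Fin 2) with hc₂_def
  have hc₂m : Measurable c₂ := by
    apply measurable_to_countable'
    intro y
    have : c₂ ⁻¹' {y} = n ⁻¹' {m : ℕ | m % 2 = y.val} := by
      ext x
      simp only [Set.mem_preimage, Set.mem_singleton_iff, hc₂_def, Set.mem_setOf_eq]
      constructor
      · intro h; rw [← h]
      · intro h; exact Fin.ext h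
    rw [this]
    exact hnmeas (Set.to_countable _).measurableSet
  have hprop : ∀ x ∈ M, ∀ y ∈ M, ((x, y) ∈ D ∨ (y, x) ∈ D) → c₂ x ≠ c₂ y := by
    have haux : ∀ x ∈ M, ∀ y ∈ M, (x, y) ∈ D → n x = n y + 1 := by
      intro x hx y hy hxy
      obtain ⟨hxd, hFx⟩ := hFD x y hxy
      have hxS : x ∉ Sset := by
        rw [hSmem]
        push_neg
        exact ⟨hxd, by rw [hFx]; exact hy, hx⟩
      rw [hrec x hxS, hFx]
    rintro x hx y hy (hxy | hyx)
    · have := haux x hx y hy hxy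
      intro h
      have hv : n x % 2 = n y % 2 := congrArg Fin.val h
      omega
    · have := haux y hy x hx hyx
      intro h
      have hv : n x % 2 = n y % 2 := congrArg Fin.val h
      omega
  exact ⟨M, hMm, ⟨c₂, hc₂m, hprop⟩, hdomin⟩
end

section
/- Let X be a standard Borel space, f : X → X a Borel function, and let D_f be the Borel directed graph generated by f, i.e., (x,y) ∈ D_f iff y = f(x) and x ≠ y. Then the following are equivalent: (1) the underlying graph of D_f has finite Borel chromatic number; (2) there is a Borel set A ⊆ X that is independent in the underlying graph of D_f and recurrent (i.e., ρ(x, A) < ∞ for all x ∈ X, where ρ is directed distance in D_f); (3) the underlying graph of D_f has Borel chromatic number at most 3. -/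
/-!
(1) ⇒ (2): given a Borel coloring `c` with finitely many colors, let `M` be the set of points whose
color is minimal on their forward orbit. Every orbit enters `M`, and along an edge that stays in `M`
the color strictly increases, so every orbit eventually reaches a point of `M` whose image is a fixed
point or lies outside `M`; these points form a Borel independent recurrent set.

(2) ⇒ (3): given a Borel independent recurrent set `A`, color `A` by `0` and every other point by
`1` or `2` according to the parity of its hitting time of `A`, which drops by one along each edge.
-/

namespace FunctionGraph

variable {X α : Type*} (f : X → X)

def IsColoring (c : X → α) : Prop :=
  ∀ x y : X, x ≠ y → (f x = y ∨ f y = x) → c x ≠ c y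

def IsIndependent (A : Set X) : Prop :=
  ∀ x ∈ A, ∀ y ∈ A, x ≠ y → f x ≠ y ∧ f y ≠ x

def IsRecurrent (A : Set X) : Prop :=
  ∀ x : X, ∃ k : ℕ, f^[k] x ∈ A

variable {f}

theorem isColoring_iff {c : X → α} : IsColoring f c ↔ ∀ x, f x ≠ x → c (f x) ≠ c x := by
  refine ⟨fun h x hx => (h x (f x) hx.symm (.inl rfl)).symm, ?_⟩
  rintro h x y hxy (rfl | rfl)
  · exact (h x (Ne.symm hxy)).symm
  · exact h y hxy

theorem isIndependent_iff {A : Set X} : IsIndependent f A ↔ ∀ x ∈ A, f x ∈ A → f x = x := by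
  refine ⟨fun h x hx hfx => by_contra fun hne => (h x hx (f x) hfx (Ne.symm hne)).1 rfl, ?_⟩
  intro h x hx y hy hxy
  exact ⟨fun hfx => hxy (hfx ▸ h x hx (hfx ▸ hy)).symm, fun hfy => hxy (hfy ▸ h y hy (hfy ▸ hx))⟩

theorem exists_iterate_mem_of_lt_apply [Preorder α] [WellFoundedGT α] {P A : Set X} (μ : X → α)
    (h : ∀ x ∈ P, x ∉ A → f x ∈ P ∧ μ x < μ (f x)) {x : X} (hx : x ∈ P) :
    ∃ n, f^[n] x ∈ A := by
  induction hμ : μ x using WellFoundedGT.induction generalizing x with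
  | _ a ih =>
    by_cases hxA : x ∈ A
    · exact ⟨0, hxA⟩
    obtain ⟨hfx, hlt⟩ := h x hx hxA
    obtain ⟨n, hn⟩ := ih (μ (f x)) (hμ ▸ hlt) hfx rfl
    exact ⟨n + 1, hn⟩

def orbitMinSet [LE α] (f : X → X) (c : X → α) : Set X :=
  {x | ∀ n, c x ≤ c (f^[n] x)}

theorem exists_iterate_mem_orbitMinSet [LinearOrder α] [WellFoundedLT α] (c : X → α) (x : X) :
    ∃ n, f^[n] x ∈ orbitMinSet f c := by
  set n := Function.argmin fun n => c (f^[n] x)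
  refine ⟨n, fun m => ?_⟩
  rw [← Function.iterate_add_apply]
  exact Function.argmin_le (fun n => c (f^[n] x)) (m + n)

theorem measurableSet_orbitMinSet [MeasurableSpace X] {k : ℕ} {c : X → Fin k} (hf : Measurable f)
    (hc : Measurable c) : MeasurableSet (orbitMinSet f c) := by
  simp only [orbitMinSet, Set.ofPred_forall]
  exact MeasurableSet.iInter fun n => measurableSet_le hc (hc.comp (hf.iterate n))

/-- For a coloring `c`, the condition `c (f x) = c x` just says `f x = x`; it is used because the
diagonal of `X` need not be measurable. -/
def orbitMinExitSet [LE α] (f : X → X) (c : X → α) : Set X :=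
  orbitMinSet f c ∩ {x | f x ∈ orbitMinSet f c → c (f x) = c x}

theorem measurableSet_orbitMinExitSet [MeasurableSpace X] {k : ℕ} {c : X → Fin k}
    (hf : Measurable f) (hc : Measurable c) : MeasurableSet (orbitMinExitSet f c) :=
  have hM := measurableSet_orbitMinSet hf hc
  hM.inter ((hM.preimage hf).imp (measurableSet_eq_fun (hc.comp hf) hc))

theorem isIndependent_orbitMinExitSet [LE α] {c : X → α} (hcol : IsColoring f c) :
    IsIndependent f (orbitMinExitSet f c) :=
  isIndependent_iff.2 fun x hx hfx => by_contra fun hne => isColoring_iff.1 hcol x hne (hx.2 hfx.1)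

theorem isRecurrent_orbitMinExitSet [LinearOrder α] [Finite α] (c : X → α) :
    IsRecurrent f (orbitMinExitSet f c) := by
  have hstep : ∀ y ∈ orbitMinSet f c, y ∉ orbitMinExitSet f c →
      f y ∈ orbitMinSet f c ∧ c y < c (f y) := by
    intro y hy hyA
    simp only [orbitMinExitSet, Set.mem_inter_iff, Set.mem_ofPred_eq, not_and, Classical.not_imp]
      at hyA
    obtain ⟨hfy, hne⟩ := hyA hy
    exact ⟨hfy, lt_of_le_of_ne (hy 1) (Ne.symm hne)⟩
  intro x
  obtain ⟨n, hn⟩ := exists_iterate_mem_orbitMinSet (f := f) c x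
  obtain ⟨m, hm⟩ := exists_iterate_mem_of_lt_apply c hstep hn
  exact ⟨m + n, by rwa [Function.iterate_add_apply]⟩

section HittingTime

variable {A : Set X} [DecidablePred (· ∈ A)]

def hittingTime (hA : IsRecurrent f A) (x : X) : ℕ :=
  Nat.find (hA x)

theorem measurable_hittingTime [MeasurableSpace X] (hf : Measurable f) (hAm : MeasurableSet A)
    (hA : IsRecurrent f A) : Measurable (hittingTime hA) :=
  measurable_find hA fun n => hAm.preimage (hf.iterate n)

theorem hittingTime_eq_succ_apply (hA : IsRecurrent f A) {x : X} (hx : x ∉ A) :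
    hittingTime hA x = hittingTime hA (f x) + 1 :=
  Nat.find_comp_succ (hA x) (hA (f x)) hx

def parityColoring (hA : IsRecurrent f A) (x : X) : Fin 3 :=
  if x ∈ A then 0 else if Even (hittingTime hA x) then 1 else 2

theorem measurable_parityColoring [MeasurableSpace X] (hf : Measurable f) (hAm : MeasurableSet A)
    (hA : IsRecurrent f A) : Measurable (parityColoring hA) :=
  Measurable.ite hAm measurable_const <|
    (measurable_from_nat (f := fun n => if Even n then (1 : Fin 3) else 2)).comp
      (measurable_hittingTime hf hAm hA)

theorem isColoring_parityColoring (hind : IsIndependent f A) (hA : IsRecurrent f A) :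
    IsColoring f (parityColoring hA) := by
  rw [isIndependent_iff] at hind
  rw [isColoring_iff]
  intro x hne
  by_cases hx : x ∈ A
  · have hfx : f x ∉ A := fun hfx => hne (hind x hx hfx)
    rw [parityColoring, parityColoring, if_pos hx, if_neg hfx]
    split_ifs <;> decide
  · have hparity := congrArg Even (hittingTime_eq_succ_apply hA hx)
    rw [Nat.even_add_one, eq_iff_iff] at hparity
    rw [parityColoring, parityColoring, if_neg hx]
    split_ifs <;> first | decide | tauto

end HittingTime

end FunctionGraph

theorem single_function_tfae_general {X : Type*} [MeasurableSpace X]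
    (f : X → X) (hf : Measurable f) :
    ((∃ k : ℕ, ∃ c : X → Fin k, Measurable c ∧
        ∀ x y : X, x ≠ y → (f x = y ∨ f y = x) → c x ≠ c y) →
      (∃ A : Set X, MeasurableSet A ∧
        (∀ x ∈ A, ∀ y ∈ A, x ≠ y → f x ≠ y ∧ f y ≠ x) ∧
        (∀ x : X, ∃ k : ℕ, f^[k] x ∈ A))) ∧
    ((∃ A : Set X, MeasurableSet A ∧
        (∀ x ∈ A, ∀ y ∈ A, x ≠ y → f x ≠ y ∧ f y ≠ x) ∧
        (∀ x : X, ∃ k : ℕ, f^[k] x ∈ A)) →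
      (∃ c : X → Fin 3, Measurable c ∧
        ∀ x y : X, x ≠ y → (f x = y ∨ f y = x) → c x ≠ c y)) ∧
    ((∃ c : X → Fin 3, Measurable c ∧
        ∀ x y : X, x ≠ y → (f x = y ∨ f y = x) → c x ≠ c y) →
      (∃ k : ℕ, ∃ c : X → Fin k, Measurable c ∧
        ∀ x y : X, x ≠ y → (f x = y ∨ f y = x) → c x ≠ c y)) := by
  refine ⟨?_, ?_, ?_⟩
  · rintro ⟨k, c, hc, hcol⟩
    exact ⟨_, FunctionGraph.measurableSet_orbitMinExitSet hf hc,
      FunctionGraph.isIndependent_orbitMinExitSet hcol, FunctionGraph.isRecurrent_orbitMinExitSet c⟩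
  · rintro ⟨A, hAm, hind, hA⟩
    classical
    exact ⟨_, FunctionGraph.measurable_parityColoring hf hAm hA,
      FunctionGraph.isColoring_parityColoring hind hA⟩
  · rintro ⟨c, hc, hcol⟩
    exact ⟨3, c, hc, hcol⟩

/-- **Proposition (graphs generated by a single Borel function).** Let `X` be a standard
Borel space, `f : X → X` a Borel function, and `D_f` the directed graph generated by `f`
(arcs `(x, f x)` for `x ≠ f x`). The following are equivalent:
(1) the underlying graph of `D_f` has finite Borel chromatic number;
(2) there is a Borel set `A` that is independent in the underlying graph of `D_f` and
recurrent (every point reaches `A` under some iterate of `f`);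
(3) the underlying graph of `D_f` has Borel chromatic number at most `3`. -/
theorem single_function_tfae {X : Type*} [MeasurableSpace X] [StandardBorelSpace X]
    (f : X → X) (hf : Measurable f) :
    ((∃ k : ℕ, ∃ c : X → Fin k, Measurable c ∧
        ∀ x y : X, x ≠ y → (f x = y ∨ f y = x) → c x ≠ c y) →
      (∃ A : Set X, MeasurableSet A ∧
        (∀ x ∈ A, ∀ y ∈ A, x ≠ y → f x ≠ y ∧ f y ≠ x) ∧
        (∀ x : X, ∃ k : ℕ, f^[k] x ∈ A))) ∧
    ((∃ A : Set X, MeasurableSet A ∧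
        (∀ x ∈ A, ∀ y ∈ A, x ≠ y → f x ≠ y ∧ f y ≠ x) ∧
        (∀ x : X, ∃ k : ℕ, f^[k] x ∈ A)) →
      (∃ c : X → Fin 3, Measurable c ∧
        ∀ x y : X, x ≠ y → (f x = y ∨ f y = x) → c x ≠ c y)) ∧
    ((∃ c : X → Fin 3, Measurable c ∧
        ∀ x y : X, x ≠ y → (f x = y ∨ f y = x) → c x ≠ c y) →
      (∃ k : ℕ, ∃ c : X → Fin k, Measurable c ∧
        ∀ x y : X, x ≠ y → (f x = y ∨ f y = x) → c x ≠ c y)) :=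
  single_function_tfae_general f hf
end

section
/- Let X be a standard Borel space, f : X → X a Borel function, and D_f the Borel directed graph generated by f. If there exists a Borel set A ⊆ X that is independent in the underlying graph of D_f and recurrent in D_f, then the underlying graph of D_f has Borel chromatic number at most 3. -/
/-- **Proposition.** Let `X` be a standard Borel space, `f : X → X` a Borel function, and
`D_f` the directed graph generated by `f` (arcs `(x, f x)` for `x ≠ f x`). If there is a
Borel set `A` that is independent in the underlying graph of `D_f` and recurrent (every
point reaches `A` under some iterate of `f`), then the underlying graph of `D_f` has
Borel chromatic number at most `3`. -/
theorem three_coloring_of_recurrent_independent {X : Type*} [MeasurableSpace X]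
    [StandardBorelSpace X] (f : X → X) (hf : Measurable f)
    (A : Set X) (hA : MeasurableSet A)
    (hind : ∀ x ∈ A, ∀ y ∈ A, x ≠ y → f x ≠ y ∧ f y ≠ x)
    (hrec : ∀ x : X, ∃ k : ℕ, f^[k] x ∈ A) :
    ∃ c : X → Fin 3, Measurable c ∧
      ∀ x y : X, x ≠ y → (f x = y ∨ f y = x) → c x ≠ c y := by
  classical
  set d : X → ℕ := fun x => Nat.find (hrec x) with hd
  have hdA : ∀ x, f^[d x] x ∈ A := fun x => Nat.find_spec (hrec x)
  have hdmin : ∀ x k, k < d x → f^[k] x ∉ A := fun x k hk => Nat.find_min (hrec x) hk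
  have hdle : ∀ x k, f^[k] x ∈ A → d x ≤ k := fun x k hk => Nat.find_min' (hrec x) hk
  -- measurability of d
  have hdmeas : Measurable d := by
    apply measurable_to_countable'
    intro n
    have heq : d ⁻¹' {n} =
        {x | f^[n] x ∈ A} ∩ ⋂ m ∈ Set.Iio n, {x | f^[m] x ∉ A} := by
      ext x
      simp only [Set.mem_preimage, Set.mem_singleton_iff, Set.mem_inter_iff,
        Set.mem_iInter, Set.mem_setOf_eq, Set.mem_Iio, hd]
      constructor
      · rintro rfl
        exact ⟨Nat.find_spec (hrec x), fun m hm => Nat.find_min (hrec x) hm⟩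
      · rintro ⟨h1, h2⟩
        exact le_antisymm (Nat.find_min' (hrec x) h1)
          (le_of_not_gt fun h => h2 _ h (Nat.find_spec (hrec x)))
    rw [heq]
    refine (hA.preimage (hf.iterate n)).inter ?_
    refine MeasurableSet.biInter (Set.to_countable _) fun m _ => ?_
    exact (hA.preimage (hf.iterate m)).compl
  -- key step lemma
  have hstep : ∀ x, x ∉ A → d x = d (f x) + 1 := by
    intro x hx
    have hdx : 1 ≤ d x := by
      rcases Nat.eq_zero_or_pos (d x) with h | h
      · exfalso; apply hx; have := hdA x; rwa [h] at this
      · exact h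
    have h1 : d (f x) ≤ d x - 1 := by
      apply hdle
      have : f^[d x - 1] (f x) = f^[d x] x := by
        rw [← Function.iterate_succ_apply]
        congr 1
        omega
      rw [this]; exact hdA x
    have h2 : d x ≤ d (f x) + 1 := by
      apply hdle
      rw [Function.iterate_succ_apply]
      exact hdA (f x)
    omega
  -- the coloring
  refine ⟨fun x => if x ∈ A then (2 : Fin 3) else (⟨d x % 2, by omega⟩ : Fin 3), ?_, ?_⟩
  · refine Measurable.ite hA measurable_const ?_
    exact (measurable_from_top (f := fun n : ℕ => (⟨n % 2, by omega⟩ : Fin 3))).comp hdmeas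
  · have key : ∀ x y : X, x ≠ y → f x = y →
        (if x ∈ A then (2 : Fin 3) else ⟨d x % 2, by omega⟩) ≠
        (if y ∈ A then (2 : Fin 3) else ⟨d y % 2, by omega⟩) := by
      intro x y hxy hfx
      by_cases hxA : x ∈ A <;> by_cases hyA : y ∈ A
      · exact absurd hfx (hind x hxA y hyA hxy).1
      · simp only [if_pos hxA, if_neg hyA]
        intro h
        have := Fin.val_eq_of_eq h
        simp at this
        omega
      · simp only [if_neg hxA, if_pos hyA]
        intro h
        have := Fin.val_eq_of_eq h
        simp at this
        omega
      · simp only [if_neg hxA, if_neg hyA]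
        intro h
        have hv := Fin.val_eq_of_eq h
        simp only at hv
        have := hstep x hxA
        rw [hfx] at this
        omega
    intro x y hxy hor
    rcases hor with h | h
    · exact key x y hxy h
    · exact (key y x hxy.symm h).symm
end

section
/- Let V = [ω]^ω be the standard Borel space of infinite subsets of ℕ, and let f : V → V be the Borel function f(x) = x \ {min x}. Then the directed graph D_f generated by f admits no Borel set A ⊆ V that is both independent in the underlying graph of D_f and recurrent in D_f. -/
/-- The standard Borel space `[ω]^ω` of infinite subsets of `ℕ`, coded as characteristic
functions `ℕ → Bool` with infinite support. -/
def InfSubsetNat : Type := {x : ℕ → Bool // {n : ℕ | x n = true}.Infinite}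

instance : MeasurableSpace InfSubsetNat :=
  Subtype.instMeasurableSpace

/-- The Borel map `x ↦ x \ {min x}` removing the least element of an infinite subset
of `ℕ`. -/
noncomputable def dropMin (x : InfSubsetNat) : InfSubsetNat :=
  ⟨fun n => if n = sInf {m : ℕ | x.1 m = true} then false else x.1 n, by
    refine Set.Infinite.mono ?_
      (x.2.diff (Set.finite_singleton (sInf {m : ℕ | x.1 m = true})))
    intro n hn
    simp only [Set.mem_diff, Set.mem_setOf_eq, Set.mem_singleton_iff] at hn
    simp [hn.1, hn.2]⟩

/-!
By the Galvin–Prikry theorem every Borel set `A ⊆ [ω]^ω` is completely Ramsey; in particular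
there is an infinite `T ⊆ ℕ` with `[T]^ω ⊆ A` or `[T]^ω ∩ A = ∅`. In the first case `T` and
`T \ {min T}` are two adjacent points of `A`. In the second, `[T]^ω` is closed under
`x ↦ x \ {min x}`, so the orbit of `T` never meets `A`.

The completely Ramsey sets form a σ-algebra containing the sets `{x | n ∈ x}`. Closure under
countable unions is a fusion argument combined with Galvin's lemma on families of finite sets,
which is proved by combinatorial forcing.
-/

open Set

namespace GalvinPrikry

def above (t : Finset ℕ) (T : Set ℕ) : Set ℕ := {a ∈ T | ∀ b ∈ t, b < a}

lemma above_subset (t : Finset ℕ) (T : Set ℕ) : above t T ⊆ T := fun _ ha => ha.1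

@[simp]
lemma above_empty (T : Set ℕ) : above ∅ T = T := by
  simp [above]

lemma infinite_above {T : Set ℕ} (hT : T.Infinite) (t : Finset ℕ) : (above t T).Infinite := by
  refine (hT.sdiff (finite_Iic (t.sup id))).mono ?_
  rintro a ⟨haT, hat⟩
  exact ⟨haT, fun b hb => (Finset.le_sup (f := id) hb).trans_lt (not_le.1 hat)⟩

def IsInitialSegment (u : Finset ℕ) (y : Set ℕ) : Prop :=
  ↑u ⊆ y ∧ ∀ b ∈ u, ∀ a ∈ y, a ≤ b → a ∈ u

lemma exists_isInitialSegment_le_sup {y : Set ℕ} (hy : y.Infinite) (n : ℕ) :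
    ∃ u, IsInitialSegment u y ∧ n ≤ u.sup id := by
  obtain ⟨m, hmy, hnm⟩ := hy.exists_gt n
  have hfin : (y ∩ Iic m).Finite := (finite_Iic m).subset inter_subset_right
  refine ⟨hfin.toFinset, ⟨fun v hv => (hfin.mem_toFinset.1 hv).1, fun b hb a ha hab => ?_⟩,
    hnm.le.trans (Finset.le_sup (f := id) (hfin.mem_toFinset.2 ⟨hmy, mem_Iic.2 le_rfl⟩))⟩
  exact hfin.mem_toFinset.2 ⟨ha, hab.trans (hfin.mem_toFinset.1 hb).2⟩

section Fusion

variable {ι : Type*} {P : ι → Set ℕ → Prop}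

lemma exists_subset_forall_mem (hmono : ∀ i W W', W' ⊆ W → P i W → P i W')
    (hdense : ∀ i W, W.Infinite → ∃ W' ⊆ W, W'.Infinite ∧ P i W')
    (F : Finset ι) {W : Set ℕ} (hW : W.Infinite) :
    ∃ W' ⊆ W, W'.Infinite ∧ ∀ i ∈ F, P i W' := by
  classical
  induction F using Finset.induction_on generalizing W with
  | empty => exact ⟨W, subset_rfl, hW, by simp⟩
  | insert i F _ ih =>
    obtain ⟨W₁, hW₁W, hW₁, hP₁⟩ := hdense i W hW
    obtain ⟨W₂, hW₂W₁, hW₂, hP₂⟩ := ih hW₁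
    refine ⟨W₂, hW₂W₁.trans hW₁W, hW₂, ?_⟩
    rw [Finset.forall_mem_insert]
    exact ⟨hmono _ _ _ hW₂W₁ hP₁, hP₂⟩

/-- Fusion: `W (k+1)` is chosen inside `W k` above `h k = min (W k)` so that it satisfies `P t`
for every `t ⊆ {0, …, h k}`; the set `T` of all the `h k` then works. -/
theorem exists_subset_forall_above {P : Finset ℕ → Set ℕ → Prop}
    (hmono : ∀ t W W', W' ⊆ W → P t W → P t W')
    (hdense : ∀ t W, W.Infinite → ∃ W' ⊆ W, W'.Infinite ∧ P t W')
    {S : Set ℕ} (hS : S.Infinite) :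
    ∃ T ⊆ S, T.Infinite ∧ ∀ t : Finset ℕ, ↑t ⊆ T → P t (above t T) := by
  classical
  choose shrink hshrink hinf hP using fun (F : Finset (Finset ℕ)) (W : {W : Set ℕ // W.Infinite}) =>
    exists_subset_forall_mem hmono hdense F W.2
  let next (W : {W : Set ℕ // W.Infinite}) : {W : Set ℕ // W.Infinite} :=
    ⟨shrink (Finset.range (sInf W.1 + 1)).powerset ⟨above {sInf W.1} W.1, infinite_above W.2 _⟩,
      hinf _ _⟩
  let W (k : ℕ) : Set ℕ := (next^[k] ⟨shrink {∅} ⟨S, hS⟩, hinf _ _⟩).1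
  let h (k : ℕ) : ℕ := sInf (W k)
  have hW (k : ℕ) : (W k).Infinite := (next^[k] _).2
  have hmem (k : ℕ) : h k ∈ W k := Nat.sInf_mem (hW k).nonempty
  have hnext (k : ℕ) : W (k + 1) = shrink (Finset.range (h k + 1)).powerset
      ⟨above {h k} (W k), infinite_above (hW k) _⟩ := by
    simp only [W, Function.iterate_succ_apply']; rfl
  have hsucc (k : ℕ) : W (k + 1) ⊆ above {h k} (W k) := hnext k ▸ hshrink _ _
  have hanti : Antitone W := antitone_nat_of_succ_le fun k => (hsucc k).trans (above_subset _ _)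
  have hh : StrictMono h := strictMono_nat_of_lt_succ fun k =>
    (hsucc k (hmem (k + 1))).2 _ (Finset.mem_singleton_self _)
  have hW₀ : range h ⊆ W 0 := range_subset_iff.2 fun k => hanti (Nat.zero_le k) (hmem k)
  refine ⟨range h, hW₀.trans (hshrink _ _), infinite_range_of_injective hh.injective,
    fun t ht => ?_⟩
  rcases t.eq_empty_or_nonempty with rfl | hne
  · exact hmono _ _ _ ((above_subset _ _).trans hW₀) (hP {∅} _ ∅ (Finset.mem_singleton_self _))
  obtain ⟨k, hk⟩ := ht (t.max'_mem hne)
  have htk : t ∈ (Finset.range (h k + 1)).powerset := Finset.mem_powerset.2 fun b hb =>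
    Finset.mem_range.2 (Nat.lt_succ_of_le (hk ▸ t.le_max' b hb))
  refine hmono _ _ _ ?_ (hnext k ▸ hP _ _ t htk)
  rintro _ ⟨⟨i, rfl⟩, hi⟩
  have hki : k < i := hh.lt_iff_lt.1 (hk ▸ hi _ (t.max'_mem hne))
  exact hanti hki (hmem i)

end Fusion

section Galvin

variable (D : Finset ℕ → Prop)

def Accepts (t : Finset ℕ) (W : Set ℕ) : Prop :=
  ∀ y ⊆ W, y.Infinite → ∃ u, D u ∧ IsInitialSegment u (↑t ∪ y)

def Rejects (t : Finset ℕ) (W : Set ℕ) : Prop :=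
  ∀ W' ⊆ W, W'.Infinite → ¬ Accepts D t W'

variable {D}

lemma Accepts.mono {t : Finset ℕ} {W W' : Set ℕ} (h : Accepts D t W) (hW : W' ⊆ W) :
    Accepts D t W' :=
  fun y hy => h y (hy.trans hW)

lemma Rejects.mono {t : Finset ℕ} {W W' : Set ℕ} (h : Rejects D t W) (hW : W' ⊆ W) :
    Rejects D t W' :=
  fun V hV => h V (hV.trans hW)

lemma accepts_above_of_mem {t : Finset ℕ} (hD : D t) (T : Set ℕ) : Accepts D t (above t T) := by
  refine fun y hy _ => ⟨t, hD, subset_union_left, fun b hb a ha hab => ?_⟩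
  rcases ha with ha | ha
  · exact ha
  · exact absurd ((hy ha).2 b hb) hab.not_gt

lemma exists_accepts_or_rejects (t : Finset ℕ) {W : Set ℕ} (hW : W.Infinite) :
    ∃ W' ⊆ W, W'.Infinite ∧ (Accepts D t W' ∨ Rejects D t W') := by
  by_cases h : ∃ W' ⊆ W, W'.Infinite ∧ Accepts D t W'
  · obtain ⟨W', hW'W, hW', hacc⟩ := h
    exact ⟨W', hW'W, hW', Or.inl hacc⟩
  · push Not at h
    exact ⟨W, subset_rfl, hW, Or.inr h⟩

/-- An infinite `y ⊆ B` is `{min y} ∪ (y \ {min y})` with `y \ {min y}` above `min y`. -/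
lemma accepts_of_forall_accepts_insert {t : Finset ℕ} {T B : Set ℕ} (hB : B ⊆ above t T)
    (hacc : ∀ a ∈ B, Accepts D (insert a t) (above (insert a t) T)) : Accepts D t B := by
  classical
  intro y hyB hy
  set a := sInf y
  have ha : a ∈ y := Nat.sInf_mem hy.nonempty
  have hya : y \ {a} ⊆ above (insert a t) T := by
    rintro v ⟨hvy, hva⟩
    refine ⟨(hB (hyB hvy)).1, fun b hb => ?_⟩
    rcases Finset.mem_insert.1 hb with rfl | hb
    · exact (Nat.sInf_le hvy).lt_of_ne' hva
    · exact (hB (hyB hvy)).2 b hb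
  obtain ⟨u, hDu, hu⟩ := hacc a (hyB ha) _ hya (hy.sdiff (finite_singleton a))
  refine ⟨u, hDu, ?_⟩
  have : (↑(insert a t) ∪ y \ {a} : Set ℕ) = ↑t ∪ y := by
    ext v
    by_cases hv : v = a <;> simp [hv, ha]
  rwa [this] at hu

/-- If `above t T` rejects `t`, then all but finitely many `a` have `insert a t` rejected too,
since otherwise those `a` form a set accepting `t` (`accepts_of_forall_accepts_insert`); a second
fusion discards the exceptions. -/
lemma exists_subset_forall_rejects {T : Set ℕ} (hT : T.Infinite)
    (hdec : ∀ t : Finset ℕ, ↑t ⊆ T → Accepts D t (above t T) ∨ Rejects D t (above t T))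
    (hrej : Rejects D ∅ T) :
    ∃ T' ⊆ T, T'.Infinite ∧ ∀ t : Finset ℕ, ↑t ⊆ T' → Rejects D t (above t T) := by
  classical
  set R : Finset ℕ → Prop := fun t => Rejects D t (above t T)
  have hbad (t : Finset ℕ) (ht : ↑t ⊆ T) (hRt : R t) :
      {a ∈ above t T | ¬ R (insert a t)}.Finite := by
    by_contra hinf
    refine hRt _ (sep_subset _ _) hinf (accepts_of_forall_accepts_insert (sep_subset _ _) ?_)
    rintro a ⟨ha, hRa⟩
    exact (hdec _ (by simpa [insert_subset_iff] using ⟨ha.1, ht⟩)).resolve_right hRa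
  obtain ⟨T', hT'T, hT', hext⟩ := exists_subset_forall_above
    (P := fun t W => ↑t ⊆ T → R t → ∀ a ∈ W ∩ above t T, R (insert a t))
    (fun _ _ _ hW h ht hRt a ha => h ht hRt a ⟨hW ha.1, ha.2⟩)
    (fun t W hW => by
      by_cases h : ↑t ⊆ T ∧ R t
      · refine ⟨W \ {a ∈ above t T | ¬ R (insert a t)}, sdiff_subset,
          hW.sdiff (hbad t h.1 h.2), fun _ _ a ha => ?_⟩
        by_contra hRa
        exact ha.1.2 ⟨ha.2, hRa⟩
      · exact ⟨W, subset_rfl, hW, fun ht hRt => absurd ⟨ht, hRt⟩ h⟩) hT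
  refine ⟨T', hT'T, hT', fun t ht => ?_⟩
  induction t using Finset.induction_on_max with
  | empty => simpa [R] using hrej
  | insert a t hlt ih =>
    rw [Finset.coe_insert, insert_subset_iff] at ht
    exact hext t ht.2 (ht.2.trans hT'T) (ih ht.2) a ⟨⟨ht.1, hlt⟩, hT'T ht.1, hlt⟩

theorem galvin (D : Finset ℕ → Prop) {S : Set ℕ} (hS : S.Infinite) :
    ∃ T ⊆ S, T.Infinite ∧ ((∀ y ⊆ T, y.Infinite → ∃ u, D u ∧ IsInitialSegment u y) ∨
      ∀ t : Finset ℕ, ↑t ⊆ T → ¬ D t) := by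
  obtain ⟨T, hTS, hT, hdec⟩ := exists_subset_forall_above
    (P := fun t W => Accepts D t W ∨ Rejects D t W)
    (fun _ _ _ hW h => h.imp (·.mono hW) (·.mono hW)) (fun t _ => exists_accepts_or_rejects t) hS
  by_cases hacc : Accepts D ∅ T
  · exact ⟨T, hTS, hT, Or.inl fun y hy hy' => by simpa using hacc y hy hy'⟩
  have hrej : Rejects D ∅ T := by simpa [hacc] using hdec ∅ (by simp)
  obtain ⟨T', hT'T, hT', hR⟩ := exists_subset_forall_rejects hT hdec hrej
  exact ⟨T', hT'T.trans hTS, hT', Or.inr fun t ht hDt =>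
    hR t ht _ subset_rfl (infinite_above hT t) (accepts_above_of_mem hDt T)⟩

end Galvin

end GalvinPrikry

namespace InfSubsetNat

open GalvinPrikry

def toSet (x : InfSubsetNat) : Set ℕ := {n | x.1 n = true}

lemma infinite_toSet (x : InfSubsetNat) : x.toSet.Infinite := x.2

open Classical in
noncomputable def ofSet (T : Set ℕ) (hT : T.Infinite) : InfSubsetNat :=
  ⟨fun n => decide (n ∈ T), by simpa using hT⟩

@[simp]
lemma toSet_ofSet (T : Set ℕ) (hT : T.Infinite) : (ofSet T hT).toSet = T := by
  ext n
  simp [toSet, ofSet]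

/-- The Ellentuck neighbourhood `[s, T]`. -/
def box (s : Finset ℕ) (T : Set ℕ) : Set InfSubsetNat := {x | ↑s ⊆ x.toSet ∧ x.toSet ⊆ ↑s ∪ T}

lemma box_mono {s : Finset ℕ} {T T' : Set ℕ} (h : T' ⊆ T) : box s T' ⊆ box s T :=
  fun _ hx => ⟨hx.1, hx.2.trans (union_subset_union_right _ h)⟩

@[simp]
lemma mem_box_empty {x : InfSubsetNat} {T : Set ℕ} : x ∈ box ∅ T ↔ x.toSet ⊆ T := by
  simp [box]

lemma toSet_diff_subset_of_mem_box {x : InfSubsetNat} {s : Finset ℕ} {T : Set ℕ}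
    (hx : x ∈ box s T) : x.toSet \ ↑s ⊆ T :=
  fun _ hv => (hx.2 hv.1).resolve_left hv.2

lemma mem_box_union_above {x : InfSubsetNat} {s u : Finset ℕ} {T : Set ℕ} (hx : x ∈ box s T)
    (hu : IsInitialSegment u (x.toSet \ ↑s)) : x ∈ box (s ∪ u) (above u T) := by
  refine ⟨?_, fun v hv => ?_⟩
  · rw [Finset.coe_union]
    exact union_subset hx.1 (hu.1.trans sdiff_subset)
  by_cases hvs : v ∈ s
  · exact Or.inl (Finset.mem_union_left _ hvs)
  by_cases hvu : v ∈ u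
  · exact Or.inl (Finset.mem_union_right _ hvu)
  refine Or.inr ⟨toSet_diff_subset_of_mem_box hx ⟨hv, hvs⟩, fun b hb => ?_⟩
  exact lt_of_not_ge fun hvb => hvu (hu.2 b hb v ⟨hv, hvs⟩ hvb)

def Decides (A : Set InfSubsetNat) (s : Finset ℕ) (T : Set ℕ) : Prop :=
  box s T ⊆ A ∨ Disjoint (box s T) A

lemma Decides.mono {A : Set InfSubsetNat} {s : Finset ℕ} {T T' : Set ℕ} (h : Decides A s T)
    (hT : T' ⊆ T) : Decides A s T' :=
  h.imp (box_mono hT).trans fun hd => hd.mono_left (box_mono hT)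

lemma Decides.compl {A : Set InfSubsetNat} {s : Finset ℕ} {T : Set ℕ} (h : Decides A s T) :
    Decides Aᶜ s T :=
  h.symm.imp subset_compl_iff_disjoint_right.2 disjoint_compl_right_iff_subset.2

def IsCompletelyRamsey (A : Set InfSubsetNat) : Prop :=
  ∀ (s : Finset ℕ) (S : Set ℕ), S.Infinite → ∃ T ⊆ S, T.Infinite ∧ Decides A s T

lemma isCompletelyRamsey_empty : IsCompletelyRamsey ∅ :=
  fun _ S hS => ⟨S, subset_rfl, hS, Or.inr (disjoint_empty _)⟩

lemma IsCompletelyRamsey.compl {A : Set InfSubsetNat} (hA : IsCompletelyRamsey A) :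
    IsCompletelyRamsey Aᶜ := fun s S hS => by
  obtain ⟨T, hTS, hT, hdec⟩ := hA s S hS
  exact ⟨T, hTS, hT, hdec.compl⟩

lemma isCompletelyRamsey_mem_toSet (n : ℕ) : IsCompletelyRamsey {x | n ∈ x.toSet} := by
  intro s S hS
  refine ⟨above {n} S, above_subset _ _, infinite_above hS _, ?_⟩
  have hbox (x : InfSubsetNat) (hx : x ∈ box s (above {n} S)) : n ∈ x.toSet ↔ n ∈ s :=
    ⟨fun hn => (hx.2 hn).resolve_right fun h => (h.2 n (Finset.mem_singleton_self n)).false,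
      fun hn => hx.1 hn⟩
  by_cases hn : n ∈ s
  · exact Or.inl fun x hx => (hbox x hx).2 hn
  · exact Or.inr (disjoint_left.2 fun x hx hxn => hn ((hbox x hx).1 hxn))

/-- Fuse so that `box (s ∪ t) (above t T)` decides `A n` for every `n ≤ max t`, then apply `galvin`
to the family of stems `t` on which some `A n` is forced. -/
theorem IsCompletelyRamsey.iUnion {A : ℕ → Set InfSubsetNat} (hA : ∀ n, IsCompletelyRamsey (A n)) :
    IsCompletelyRamsey (⋃ n, A n) := by
  intro s S hS
  obtain ⟨T, hTS, hT, hdec⟩ := exists_subset_forall_above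
    (P := fun t W => ∀ n ≤ t.sup id, Decides (A n) (s ∪ t) W)
    (fun _ _ _ hW h n hn => (h n hn).mono hW)
    (fun t W hW => by
      obtain ⟨W', hW'W, hW', h⟩ := exists_subset_forall_mem
        (P := fun n W => Decides (A n) (s ∪ t) W) (fun _ _ _ hW h => h.mono hW)
        (fun n W hW => hA n (s ∪ t) W hW) (Finset.range (t.sup id + 1)) hW
      exact ⟨W', hW'W, hW', fun n hn => h n (Finset.mem_range_succ_iff.2 hn)⟩) hS
  obtain ⟨T', hT'T, hT', hgalvin⟩ := galvin (fun t => ∃ n, box (s ∪ t) (above t T) ⊆ A n) hT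
  refine ⟨T', hT'T.trans hTS, hT', hgalvin.imp (fun hpos x hx => ?_) fun hneg => ?_⟩
  · obtain ⟨u, ⟨n, hn⟩, hu⟩ := hpos _ (toSet_diff_subset_of_mem_box hx)
      ((infinite_toSet x).sdiff s.finite_toSet)
    exact mem_iUnion.2 ⟨n, hn (mem_box_union_above (box_mono hT'T hx) hu)⟩
  refine disjoint_iUnion_right.2 fun n => disjoint_left.2 fun x hx hxA => ?_
  obtain ⟨u, hu, hnu⟩ :=
    exists_isInitialSegment_le_sup ((infinite_toSet x).sdiff s.finite_toSet) n
  have huT' : ↑u ⊆ T' := hu.1.trans (toSet_diff_subset_of_mem_box hx)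
  rcases hdec u (huT'.trans hT'T) n hnu with hsub | hdisj
  · exact hneg _ huT' ⟨n, hsub⟩
  · exact hdisj.notMem_of_mem_left (mem_box_union_above (box_mono hT'T hx) hu) hxA

abbrev completelyRamseyMeasurableSpace : MeasurableSpace InfSubsetNat where
  MeasurableSet' := IsCompletelyRamsey
  measurableSet_empty := isCompletelyRamsey_empty
  measurableSet_compl _ := IsCompletelyRamsey.compl
  measurableSet_iUnion _ := IsCompletelyRamsey.iUnion

open MeasureTheory in
theorem isCompletelyRamsey_of_measurableSet {A : Set InfSubsetNat} (hA : MeasurableSet A) :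
    IsCompletelyRamsey A := by
  have hval : Measurable[completelyRamseyMeasurableSpace] (Subtype.val : InfSubsetNat → ℕ → Bool) :=
    (@measurable_pi_iff _ _ _ completelyRamseyMeasurableSpace _ _).2 fun n =>
      measurable_to_bool (mα := completelyRamseyMeasurableSpace) (isCompletelyRamsey_mem_toSet n)
  obtain ⟨B, hB, rfl⟩ := hA
  exact hval hB

lemma toSet_dropMin_subset (x : InfSubsetNat) : (dropMin x).toSet ⊆ x.toSet := by
  intro n hn
  by_contra h
  simp_all [toSet, dropMin]

lemma dropMin_ne_self (x : InfSubsetNat) : dropMin x ≠ x := by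
  intro h
  have hmin : x.1 (sInf x.toSet) = true := Nat.sInf_mem (infinite_toSet x).nonempty
  have : (dropMin x).1 (sInf x.toSet) = false := if_pos rfl
  rw [h, hmin] at this
  exact Bool.noConfusion this

lemma mapsTo_dropMin_box (T : Set ℕ) : MapsTo dropMin (box ∅ T) (box ∅ T) := fun x hx =>
  mem_box_empty.2 ((toSet_dropMin_subset x).trans (mem_box_empty.1 hx))

end InfSubsetNat

open InfSubsetNat in
/-- **Proposition (Galvin–Prikry example).** For the directed graph on `[ω]^ω` generated
by the Borel function `f(x) = x \ {min x}`, there is no Borel set that is both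
independent in the underlying graph and recurrent. -/
theorem no_independent_recurrent_borel_set :
    ¬ ∃ A : Set InfSubsetNat, MeasurableSet A ∧
      (∀ x ∈ A, ∀ y ∈ A, x ≠ y → dropMin x ≠ y ∧ dropMin y ≠ x) ∧
      (∀ x : InfSubsetNat, ∃ k : ℕ, dropMin^[k] x ∈ A) := by
  rintro ⟨A, hA, hind, hrec⟩
  obtain ⟨T, -, hT, hdec⟩ := isCompletelyRamsey_of_measurableSet hA ∅ univ infinite_univ
  set x := ofSet T hT
  have hx : x ∈ box ∅ T := by simp [x]
  rcases hdec with hsub | hdisj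
  · exact (hind x (hsub hx) _ (hsub (mapsTo_dropMin_box T hx)) (dropMin_ne_self x).symm).1 rfl
  · obtain ⟨k, hk⟩ := hrec x
    exact hdisj.notMem_of_mem_left ((mapsTo_dropMin_box T).iterate k hx) hk
end

section
/- Let X be a standard Borel space and D a locally countable Borel directed graph on X with bounded out-degree 2 whose underlying graph has Borel chromatic number exactly 5. Then D has no Borel kernel; equivalently, if a locally countable Borel directed graph with bounded out-degree 2 and finite Borel chromatic number has a Borel kernel, then its Borel chromatic number is at most 4. -/
open Set

/-- Projection of a Borel set with sections of size at most 2 is Borel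
(elementary case of Luzin–Novikov, via the Lusin–Souslin injective image theorem). -/
lemma measurableSet_proj_of_small_sections {X : Type*} [MeasurableSpace X]
    [StandardBorelSpace X] (E : Set (X × X)) (hE : MeasurableSet E)
    (hsec : ∀ x y₁ y₂ y₃, (x, y₁) ∈ E → (x, y₂) ∈ E → (x, y₃) ∈ E →
      y₁ = y₂ ∨ y₁ = y₃ ∨ y₂ = y₃) :
    MeasurableSet {x | ∃ y, (x, y) ∈ E} := by
  obtain ⟨e, he⟩ := MeasureTheory.exists_measurableEmbedding_real X
  set F : Set (X × X × X) :=
    {p | (p.1, p.2.1) ∈ E ∧ (p.1, p.2.2) ∈ E ∧ e p.2.1 < e p.2.2} with hFdef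
  have hFmeas : MeasurableSet F := by
    apply MeasurableSet.inter
    · exact hE.preimage (measurable_fst.prodMk (measurable_fst.comp measurable_snd))
    apply MeasurableSet.inter
    · exact hE.preimage (measurable_fst.prodMk (measurable_snd.comp measurable_snd))
    · exact measurableSet_lt (he.measurable.comp (measurable_fst.comp measurable_snd))
        (he.measurable.comp (measurable_snd.comp measurable_snd))
  have hFinj : Set.InjOn Prod.fst F := by
    rintro ⟨x, u, v⟩ ⟨hu, hv, huv⟩ ⟨x', u', v'⟩ ⟨hu', hv', huv'⟩ h
    simp only [Prod.fst] at h
    subst h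
    have hne : u ≠ v := fun h => by rw [h] at huv; exact lt_irrefl _ huv
    have hne' : u' ≠ v' := fun h => by rw [h] at huv'; exact lt_irrefl _ huv'
    have H1 := hsec x u v u' hu hv hu'
    have H2 := hsec x u v v' hu hv hv'
    have huu' : u = u' := by
      rcases H1 with h | h | h
      · exact absurd h hne
      · exact h
      · -- v = u'
        exfalso
        rcases H2 with h2 | h2 | h2
        · exact hne h2
        · -- u = v' : e u' < e v' = e u < e v = e u'
          subst h; subst h2
          exact lt_irrefl _ (huv.trans huv')
        · exact hne' (h.symm.trans h2)
    have hvv' : v = v' := by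
      subst huu'
      rcases H2 with h2 | h2 | h2
      · exact absurd h2 hne
      · exact absurd h2 hne'
      · exact h2
    subst huu'; subst hvv'; rfl
  have hT : MeasurableSet (Prod.fst '' F) :=
    hFmeas.image_of_measurable_injOn measurable_fst hFinj
  set T := Prod.fst '' F with hTdef
  set E₁ : Set (X × X) := E ∩ {p | p.1 ∉ T} with hE₁def
  have hE₁meas : MeasurableSet E₁ :=
    hE.inter (hT.compl.preimage measurable_fst)
  have hE₁inj : Set.InjOn Prod.fst E₁ := by
    rintro ⟨x, y⟩ ⟨hxy, hxT⟩ ⟨x', y'⟩ ⟨hxy', hxT'⟩ h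
    simp only [Prod.fst] at h
    subst h
    by_contra hne
    have hyne : y ≠ y' := fun h => hne (by rw [h])
    rcases lt_or_gt_of_ne (fun h => hyne (he.injective h) : e y ≠ e y') with h | h
    · exact hxT ⟨(x, y, y'), ⟨hxy, hxy', h⟩, rfl⟩
    · exact hxT ⟨(x, y', y), ⟨hxy', hxy, h⟩, rfl⟩
  have key : {x | ∃ y, (x, y) ∈ E} = T ∪ Prod.fst '' E₁ := by
    ext x
    constructor
    · rintro ⟨y, hy⟩
      by_cases hx : x ∈ T
      · exact Or.inl hx
      · exact Or.inr ⟨(x, y), ⟨hy, hx⟩, rfl⟩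
    · rintro (⟨⟨x', u, v⟩, ⟨hu, hv, huv⟩, rfl⟩ | ⟨⟨x', y⟩, ⟨hy, _⟩, rfl⟩)
      · exact ⟨u, hu⟩
      · exact ⟨y, hy⟩
  rw [key]
  exact hT.union (hE₁meas.image_of_measurable_injOn measurable_fst hE₁inj)

/-- If `R` is a functional relation, membership in a one-step iterate is determined
by the (unique) successor. -/
lemma step_iff {X : Type*} {R : Set (X × X)}
    (hU : ∀ ⦃x y z⦄, (x, y) ∈ R → (x, z) ∈ R → y = z)
    (s : Set X) {x y : X} (hxy : (x, y) ∈ R) :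
    (∃ z, (x, z) ∈ R ∧ z ∈ s) ↔ y ∈ s := by
  constructor
  · rintro ⟨z, hz, hzs⟩
    rwa [hU hxy hz]
  · intro h
    exact ⟨y, hxy, h⟩

/-- **Proposition.** Let `X` be a standard Borel space and `D` a locally countable Borel
directed graph on `X` with bounded out-degree `2` whose underlying graph has Borel
chromatic number exactly `5`. Then `D` has no Borel kernel: there is no Borel set `A`
independent in the underlying graph such that every vertex not in `A` has an out-neighbor
in `A`. -/
theorem no_borel_kernel_of_chromatic_five {X : Type*} [MeasurableSpace X]
    [StandardBorelSpace X]
    (D : Set (X × X)) (hDmeas : MeasurableSet D)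
    (hirr : ∀ x : X, (x, x) ∉ D)
    (hloc : ∀ x : X, {y | (x, y) ∈ D}.Countable ∧ {y | (y, x) ∈ D}.Countable)
    (hdeg : ∀ x : X, {y | (x, y) ∈ D}.Finite ∧ {y | (x, y) ∈ D}.ncard ≤ 2)
    (hchrom5 : ∃ c : X → Fin 5, Measurable c ∧
      ∀ x y : X, ((x, y) ∈ D ∨ (y, x) ∈ D) → c x ≠ c y)
    (hnot4 : ¬ ∃ c : X → Fin 4, Measurable c ∧
      ∀ x y : X, ((x, y) ∈ D ∨ (y, x) ∈ D) → c x ≠ c y) :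
    ¬ ∃ A : Set X, MeasurableSet A ∧
      (∀ x ∈ A, ∀ y ∈ A, (x, y) ∉ D) ∧
      (∀ x : X, x ∉ A → ∃ y ∈ A, (x, y) ∈ D) := by
  classical
  rintro ⟨A, hA, hInd, hKer⟩
  obtain ⟨c, hc, hcprop⟩ := hchrom5
  apply hnot4
  -- sections of subsets of D are small
  have hsecD : ∀ (E : Set (X × X)), E ⊆ D → ∀ x y₁ y₂ y₃,
      (x, y₁) ∈ E → (x, y₂) ∈ E → (x, y₃) ∈ E → y₁ = y₂ ∨ y₁ = y₃ ∨ y₂ = y₃ := by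
    intro E hED x y₁ y₂ y₃ h1 h2 h3
    by_contra h
    push_neg at h
    obtain ⟨h12, h13, h23⟩ := h
    have hsub : ({y₁, y₂, y₃} : Set X) ⊆ {y | (x, y) ∈ D} := by
      rintro z (rfl | rfl | rfl)
      · exact hED h1
      · exact hED h2
      · exact hED h3
    have h3' : ({y₁, y₂, y₃} : Set X).ncard = 3 := by
      rw [Set.ncard_insert_of_notMem (by simp [h12, h13]),
        Set.ncard_insert_of_notMem (by simp [h23]), Set.ncard_singleton]
    have hle := Set.ncard_le_ncard hsub (hdeg x).1
    have := (hdeg x).2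
    omega
  have proj : ∀ (E : Set (X × X)), MeasurableSet E → E ⊆ D →
      MeasurableSet {x | ∃ y, (x, y) ∈ E} := fun E hE hED =>
    measurableSet_proj_of_small_sections E hE (hsecD E hED)
  -- uniqueness of out-neighbours outside A
  have U : ∀ x, x ∉ A → ∀ y z, (x, y) ∈ D → y ∉ A → (x, z) ∈ D → z ∉ A → y = z := by
    intro x hx y z hy hyA hz hzA
    obtain ⟨a, haA, hxa⟩ := hKer x hx
    by_contra hne
    have hay : a ≠ y := fun h => hyA (h ▸ haA)
    have haz : a ≠ z := fun h => hzA (h ▸ haA)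
    have hsub : ({a, y, z} : Set X) ⊆ {w | (x, w) ∈ D} := by
      rintro w (rfl | rfl | rfl)
      · exact hxa
      · exact hy
      · exact hz
    have h3' : ({a, y, z} : Set X).ncard = 3 := by
      rw [Set.ncard_insert_of_notMem (by simp [hay, haz]),
        Set.ncard_insert_of_notMem (by simp [hne]), Set.ncard_singleton]
    have hle := Set.ncard_le_ncard hsub (hdeg x).1
    have := (hdeg x).2
    omega
  -- ascending and descending edge relations within B = Aᶜ
  set Asc : Set (X × X) := ((D ∩ Prod.fst ⁻¹' Aᶜ) ∩ Prod.snd ⁻¹' Aᶜ) ∩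
      (fun p : X × X => (c p.1, c p.2)) ⁻¹' {q : Fin 5 × Fin 5 | q.1 < q.2} with hAscdef
  set Dsc : Set (X × X) := ((D ∩ Prod.fst ⁻¹' Aᶜ) ∩ Prod.snd ⁻¹' Aᶜ) ∩
      (fun p : X × X => (c p.1, c p.2)) ⁻¹' {q : Fin 5 × Fin 5 | q.2 < q.1} with hDscdef
  have hltmeas : MeasurableSet {q : Fin 5 × Fin 5 | q.1 < q.2} :=
    (Set.toFinite _).measurableSet
  have hltmeas' : MeasurableSet {q : Fin 5 × Fin 5 | q.2 < q.1} :=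
    (Set.toFinite _).measurableSet
  have hcc : Measurable (fun p : X × X => (c p.1, c p.2)) :=
    (hc.comp measurable_fst).prodMk (hc.comp measurable_snd)
  have hAscmeas : MeasurableSet Asc :=
    (((hDmeas.inter (hA.compl.preimage measurable_fst)).inter
      (hA.compl.preimage measurable_snd))).inter (hltmeas.preimage hcc)
  have hDscmeas : MeasurableSet Dsc :=
    (((hDmeas.inter (hA.compl.preimage measurable_fst)).inter
      (hA.compl.preimage measurable_snd))).inter (hltmeas'.preimage hcc)
  have hAscD : Asc ⊆ D := fun p hp => hp.1.1.1
  have hDscD : Dsc ⊆ D := fun p hp => hp.1.1.1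
  have hUAsc : ∀ ⦃x y z⦄, (x, y) ∈ Asc → (x, z) ∈ Asc → y = z := fun x y z hy hz =>
    U x hy.1.1.2 y z hy.1.1.1 hy.1.2 hz.1.1.1 hz.1.2
  have hUDsc : ∀ ⦃x y z⦄, (x, y) ∈ Dsc → (x, z) ∈ Dsc → y = z := fun x y z hy hz =>
    U x hy.1.1.2 y z hy.1.1.1 hy.1.2 hz.1.1.1 hz.1.2
  -- run-length sets
  set a1 : Set X := {x | ∃ y, (x, y) ∈ Asc} with ha1def
  have ha1 : MeasurableSet a1 := proj Asc hAscmeas hAscD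
  set a2 : Set X := {x | ∃ y, (x, y) ∈ Asc ∧ y ∈ a1} with ha2def
  have ha2 : MeasurableSet a2 :=
    proj (Asc ∩ Prod.snd ⁻¹' a1) (hAscmeas.inter (ha1.preimage measurable_snd))
      (fun p hp => hAscD hp.1)
  set a3 : Set X := {x | ∃ y, (x, y) ∈ Asc ∧ y ∈ a2} with ha3def
  have ha3 : MeasurableSet a3 :=
    proj (Asc ∩ Prod.snd ⁻¹' a2) (hAscmeas.inter (ha2.preimage measurable_snd))
      (fun p hp => hAscD hp.1)
  set a4 : Set X := {x | ∃ y, (x, y) ∈ Asc ∧ y ∈ a3} with ha4def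
  have ha4 : MeasurableSet a4 :=
    proj (Asc ∩ Prod.snd ⁻¹' a3) (hAscmeas.inter (ha3.preimage measurable_snd))
      (fun p hp => hAscD hp.1)
  set d1 : Set X := {x | ∃ y, (x, y) ∈ Dsc} with hd1def
  have hd1 : MeasurableSet d1 := proj Dsc hDscmeas hDscD
  set d2 : Set X := {x | ∃ y, (x, y) ∈ Dsc ∧ y ∈ d1} with hd2def
  have hd2 : MeasurableSet d2 :=
    proj (Dsc ∩ Prod.snd ⁻¹' d1) (hDscmeas.inter (hd1.preimage measurable_snd))
      (fun p hp => hDscD hp.1)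
  set d3 : Set X := {x | ∃ y, (x, y) ∈ Dsc ∧ y ∈ d2} with hd3def
  have hd3 : MeasurableSet d3 :=
    proj (Dsc ∩ Prod.snd ⁻¹' d2) (hDscmeas.inter (hd2.preimage measurable_snd))
      (fun p hp => hDscD hp.1)
  set d4 : Set X := {x | ∃ y, (x, y) ∈ Dsc ∧ y ∈ d3} with hd4def
  have hd4 : MeasurableSet d4 :=
    proj (Dsc ∩ Prod.snd ⁻¹' d3) (hDscmeas.inter (hd3.preimage measurable_snd))
      (fun p hp => hDscD hp.1)
  -- monotonicity
  have ma21 : a2 ⊆ a1 := fun x ⟨y, hy, _⟩ => ⟨y, hy⟩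
  have ma32 : a3 ⊆ a2 := fun x ⟨y, hy, hy'⟩ => ⟨y, hy, ma21 hy'⟩
  have ma43 : a4 ⊆ a3 := fun x ⟨y, hy, hy'⟩ => ⟨y, hy, ma32 hy'⟩
  have md21 : d2 ⊆ d1 := fun x ⟨y, hy, _⟩ => ⟨y, hy⟩
  have md32 : d3 ⊆ d2 := fun x ⟨y, hy, hy'⟩ => ⟨y, hy, md21 hy'⟩
  have md43 : d4 ⊆ d3 := fun x ⟨y, hy, hy'⟩ => ⟨y, hy, md32 hy'⟩
  -- chain length bound: a successor cannot start a run of length 4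
  have hAscLt : ∀ {x y : X}, (x, y) ∈ Asc → c x < c y := fun {_ _} h => h.2
  have hDscLt : ∀ {x y : X}, (x, y) ∈ Dsc → c y < c x := fun {_ _} h => h.2
  have hbndA : ∀ {x y : X}, (x, y) ∈ Asc → y ∉ a4 := by
    intro x y hxy hy4
    obtain ⟨z1, hz1, hz1'⟩ := hy4
    obtain ⟨z2, hz2, hz2'⟩ := hz1'
    obtain ⟨z3, hz3, hz3'⟩ := hz2'
    obtain ⟨z4, hz4⟩ := hz3'
    have l0 := Fin.lt_def.mp (hAscLt hxy)
    have l1 := Fin.lt_def.mp (hAscLt hz1)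
    have l2 := Fin.lt_def.mp (hAscLt hz2)
    have l3 := Fin.lt_def.mp (hAscLt hz3)
    have l4 := Fin.lt_def.mp (hAscLt hz4)
    have := (c z4).isLt
    omega
  have hbndD : ∀ {x y : X}, (x, y) ∈ Dsc → y ∉ d4 := by
    intro x y hxy hy4
    obtain ⟨z1, hz1, hz1'⟩ := hy4
    obtain ⟨z2, hz2, hz2'⟩ := hz1'
    obtain ⟨z3, hz3, hz3'⟩ := hz2'
    obtain ⟨z4, hz4⟩ := hz3'
    have l0 := Fin.lt_def.mp (hDscLt hxy)
    have l1 := Fin.lt_def.mp (hDscLt hz1)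
    have l2 := Fin.lt_def.mp (hDscLt hz2)
    have l3 := Fin.lt_def.mp (hDscLt hz3)
    have l4 := Fin.lt_def.mp (hDscLt hz4)
    have := (c z4).isLt
    omega
  -- a vertex cannot have both an ascending and a descending out-edge
  have hdisj : ∀ {z : X}, z ∈ a1 → z ∉ d1 := by
    rintro z ⟨y, hy⟩ ⟨y', hy'⟩
    have heq : y = y' :=
      U z hy.1.1.2 y y' hy.1.1.1 hy.1.2 hy'.1.1.1 hy'.1.2
    subst heq
    exact absurd (hAscLt hy) (not_lt.mpr (le_of_lt (hDscLt hy')))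
  -- parity sets
  set oddA : Set X := (a1 \ a2) ∪ (a3 \ a4) with hoddAdef
  set oddD : Set X := (d1 \ d2) ∪ (d3 \ d4) with hoddDdef
  have hoddA : MeasurableSet oddA := ((ha1.diff ha2).union (ha3.diff ha4))
  have hoddD : MeasurableSet oddD := ((hd1.diff hd2).union (hd3.diff hd4))
  -- the 4-coloring
  set φ : X → Fin 4 := A.piecewise (fun _ => 3)
      (a1.piecewise (oddA.piecewise (fun _ => 0) (fun _ => 2))
        (oddD.piecewise (fun _ => 1) (fun _ => 2))) with hφdef
  have hφmeas : Measurable φ := by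
    apply Measurable.piecewise hA measurable_const
    apply Measurable.piecewise ha1
    · exact Measurable.piecewise hoddA measurable_const measurable_const
    · exact Measurable.piecewise hoddD measurable_const measurable_const
  -- value computations
  have hvA : ∀ z ∈ A, φ z = 3 := fun z hz => Set.piecewise_eq_of_mem _ _ _ hz
  have hv0 : ∀ z, z ∉ A → z ∈ a1 → z ∈ oddA → φ z = 0 := by
    intro z h1 h2 h3
    rw [hφdef, Set.piecewise_eq_of_notMem _ _ _ h1, Set.piecewise_eq_of_mem _ _ _ h2,
      Set.piecewise_eq_of_mem _ _ _ h3]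
  have hv2a : ∀ z, z ∉ A → z ∈ a1 → z ∉ oddA → φ z = 2 := by
    intro z h1 h2 h3
    rw [hφdef, Set.piecewise_eq_of_notMem _ _ _ h1, Set.piecewise_eq_of_mem _ _ _ h2,
      Set.piecewise_eq_of_notMem _ _ _ h3]
  have hv1 : ∀ z, z ∉ A → z ∉ a1 → z ∈ oddD → φ z = 1 := by
    intro z h1 h2 h3
    rw [hφdef, Set.piecewise_eq_of_notMem _ _ _ h1, Set.piecewise_eq_of_notMem _ _ _ h2,
      Set.piecewise_eq_of_mem _ _ _ h3]
  have hv2d : ∀ z, z ∉ A → z ∉ a1 → z ∉ oddD → φ z = 2 := by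
    intro z h1 h2 h3
    rw [hφdef, Set.piecewise_eq_of_notMem _ _ _ h1, Set.piecewise_eq_of_notMem _ _ _ h2,
      Set.piecewise_eq_of_notMem _ _ _ h3]
  have hne3 : ∀ z, z ∉ A → φ z ≠ 3 := by
    intro z hz
    by_cases h1 : z ∈ a1
    · by_cases h2 : z ∈ oddA
      · rw [hv0 z hz h1 h2]; decide
      · rw [hv2a z hz h1 h2]; decide
    · by_cases h2 : z ∈ oddD
      · rw [hv1 z hz h1 h2]; decide
      · rw [hv2d z hz h1 h2]; decide
  refine ⟨φ, hφmeas, ?_⟩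
  -- it suffices to treat a single orientation
  suffices K : ∀ x y : X, (x, y) ∈ D → φ x ≠ φ y by
    rintro x y (h | h)
    · exact K x y h
    · exact (K y x h).symm
  intro x y hxy
  by_cases hxA : x ∈ A
  · by_cases hyA : y ∈ A
    · exact absurd hxy (hInd x hxA y hyA)
    · rw [hvA x hxA]
      exact fun h => hne3 y hyA h.symm
  · by_cases hyA : y ∈ A
    · rw [hvA y hyA]
      exact hne3 x hxA
    · -- both outside A
      have hccxy : c x ≠ c y := hcprop x y (Or.inl hxy)
      rcases lt_or_gt_of_ne hccxy with hlt | hgt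
      · -- ascending edge
        have hAxy : (x, y) ∈ Asc := ⟨⟨⟨hxy, hxA⟩, hyA⟩, hlt⟩
        have hx1 : x ∈ a1 := ⟨y, hAxy⟩
        have e2 : x ∈ a2 ↔ y ∈ a1 := step_iff hUAsc a1 hAxy
        have e3 : x ∈ a3 ↔ y ∈ a2 := step_iff hUAsc a2 hAxy
        have e4 : x ∈ a4 ↔ y ∈ a3 := step_iff hUAsc a3 hAxy
        have h5 : y ∉ a4 := hbndA hAxy
        by_cases hy1 : y ∈ a1
        · -- both have ascending out-edges: parities differ
          have hx2 : x ∈ a2 := e2.mpr hy1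
          have key : x ∈ oddA ↔ y ∉ oddA := by
            rw [hoddAdef]
            simp only [Set.mem_union, Set.mem_diff]
            constructor
            · rintro (⟨_, hx2'⟩ | ⟨hx3, hx4⟩)
              · exact absurd hx2 hx2'
              · rintro (⟨_, hy2⟩ | ⟨hy3, _⟩)
                · exact hy2 (e3.mp hx3)
                · exact hx4 (e4.mpr hy3)
            · intro h
              by_cases hy2 : y ∈ a2
              · by_cases hy3 : y ∈ a3
                · exact absurd (Or.inr ⟨hy3, h5⟩) h
                · exact Or.inr ⟨e3.mpr hy2, fun hx4 => hy3 (e4.mp hx4)⟩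
              · exact absurd (Or.inl ⟨hy1, hy2⟩) h
          by_cases hxo : x ∈ oddA
          · rw [hv0 x hxA hx1 hxo, hv2a y hyA hy1 (key.mp hxo)]; decide
          · have hyo : y ∈ oddA := by
              by_contra hyo
              exact hxo (key.mpr hyo)
            rw [hv2a x hxA hx1 hxo, hv0 y hyA hy1 hyo]; decide
        · -- run of length exactly 1 at x
          have hx2 : x ∉ a2 := fun h => hy1 (e2.mp h)
          have hxo : x ∈ oddA := Or.inl ⟨hx1, hx2⟩
          rw [hv0 x hxA hx1 hxo]
          by_cases hyo : y ∈ oddD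
          · rw [hv1 y hyA hy1 hyo]; decide
          · rw [hv2d y hyA hy1 hyo]; decide
      · -- descending edge
        have hDxy : (x, y) ∈ Dsc := ⟨⟨⟨hxy, hxA⟩, hyA⟩, hgt⟩
        have hxd1 : x ∈ d1 := ⟨y, hDxy⟩
        have hx1 : x ∉ a1 := fun h => hdisj h hxd1
        have f2 : x ∈ d2 ↔ y ∈ d1 := step_iff hUDsc d1 hDxy
        have f3 : x ∈ d3 ↔ y ∈ d2 := step_iff hUDsc d2 hDxy
        have f4 : x ∈ d4 ↔ y ∈ d3 := step_iff hUDsc d3 hDxy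
        have g5 : y ∉ d4 := hbndD hDxy
        by_cases hy1 : y ∈ a1
        · -- y has an ascending out-edge, so no descending one
          have hyd1 : y ∉ d1 := hdisj hy1
          have hx2 : x ∉ d2 := fun h => hyd1 (f2.mp h)
          have hxo : x ∈ oddD := Or.inl ⟨hxd1, hx2⟩
          rw [hv1 x hxA hx1 hxo]
          by_cases hyo : y ∈ oddA
          · rw [hv0 y hyA hy1 hyo]; decide
          · rw [hv2a y hyA hy1 hyo]; decide
        · -- both colored by the descending rule: parities differ
          have key : x ∈ oddD ↔ y ∉ oddD := by
            rw [hoddDdef]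
            simp only [Set.mem_union, Set.mem_diff]
            constructor
            · rintro (⟨_, hx2'⟩ | ⟨hx3, hx4⟩)
              · rintro (⟨hyd1, _⟩ | ⟨hy3, _⟩)
                · exact hx2' (f2.mpr hyd1)
                · exact hx2' (f2.mpr (md21 (md32 hy3)))
              · rintro (⟨_, hy2⟩ | ⟨hy3, _⟩)
                · exact hy2 (f3.mp hx3)
                · exact hx4 (f4.mpr hy3)
            · intro h
              by_cases hyd1 : y ∈ d1
              · by_cases hy2 : y ∈ d2
                · by_cases hy3 : y ∈ d3
                  · exact absurd (Or.inr ⟨hy3, g5⟩) h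
                  · exact Or.inr ⟨f3.mpr hy2, fun hx4 => hy3 (f4.mp hx4)⟩
                · exact absurd (Or.inl ⟨hyd1, hy2⟩) h
              · have hx2 : x ∉ d2 := fun h' => hyd1 (f2.mp h')
                exact Or.inl ⟨hxd1, hx2⟩
          by_cases hxo : x ∈ oddD
          · rw [hv1 x hxA hx1 hxo, hv2d y hyA hy1 (key.mp hxo)]; decide
          · have hyo : y ∈ oddD := by
              by_contra hyo
              exact hxo (key.mpr hyo)
            rw [hv2d x hxA hx1 hxo, hv1 y hyA hy1 hyo]; decide
end
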